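/- arXiv:1805.00511 — 4 statements merged into one kernel-verified Lean document; each statement's English description precedes it below -/
import Mathlib

section
/- Let n ≥ 1 and let c_1, …, c_n be integers with 0 ≤ c_1 ≤ c_2 ≤ ⋯ ≤ c_n ≤ n. Then for every real number x, ∏_{i=1}^n (x + c_i − i + 1) = Σ_{k=0}^n h_k(B) · C(x + k, n), where B = B(c_1,…,c_n). -/
/-- Generalized binomial coefficient `C(x, m) = (1/m!)·∏_{j=0}^{m-1} (x - j)`. -/
noncomputable def genChoose (x : ℝ) (m : ℕ) : ℝ :=
  (∏ j ∈ Finset.range m, (x - (j : ℝ))) / (m.factorial : ℝ)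
/-- `h_k(B)`: the number of placements of `n` nonattacking rooks on the `n × n` grid
(identified with permutations `σ`, a rook in column `i` and row `σ(i)`, rows and columns
1-indexed via `Fin n` being 0-indexed) having exactly `k` rooks on the Ferrers board
whose `i`-th column has height `c i`; the rook in column `i` is on the board iff
`σ(i) ≤ c i` as 1-indexed rows, i.e. `(σ i : ℤ) < c i` in 0-indexed terms. -/
noncomputable def hB (n : ℕ) (c : Fin n → ℤ) (k : ℕ) : ℕ :=
  Nat.card {σ : Equiv.Perm (Fin n) //
    (Finset.univ.filter (fun i => ((σ i : ℕ) : ℤ) < c i)).card = k}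

/-!
Expand `C(x + |hits σ|, n)` by Vandermonde into a sum of `C(x, n - |T|)` over the subsets `T`
of the hits of `σ`. A pair `(σ, T)` is the same as the rook placement `σ|_T` on `B` together with
one of the `(n - |T|)!` permutations extending it, and `j! · C(x, j)` is the falling factorial
`(x)_j`; so the right-hand side equals `∑_P (x)_{n - |P|}` over all rook placements `P` on `B`.
Building `P` column by column, the last (tallest) column has `c_n` cells of which `|P'|` rows are
already used by the placement `P'` of the other columns, whence the product formula by
induction on `n`.
-/

open Finset Polynomial Equiv

theorem Polynomial.descPochhammer_smeval_eq_eval {R : Type*} [CommRing R] (x : R) (m : ℕ) :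
    (descPochhammer ℤ m).smeval x = (descPochhammer R m).eval x := by
  rw [← descPochhammer_map (algebraMap ℤ R), eval_map_algebraMap, aeval_eq_smeval]

theorem Ring.factorial_nsmul_choose_eq_descPochhammer_eval {R : Type*} [CommRing R]
    [BinomialRing R] (x : R) (m : ℕ) :
    m.factorial • Ring.choose x m = (descPochhammer R m).eval x := by
  rw [← Ring.descPochhammer_eq_factorial_smul_choose, descPochhammer_smeval_eq_eval]

/-- Chu–Vandermonde, with `choose (#D) j` read as the number of `j`-subsets of `D`. -/
theorem Ring.choose_add_card_eq_sum_powerset {R α : Type*} [CommRing R] [BinomialRing R] (x : R)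
    {n : ℕ} (D : Finset α) (hD : #D ≤ n) :
    Ring.choose (x + #D) n = ∑ T ∈ D.powerset, Ring.choose x (n - #T) := by
  rw [add_comm, Ring.add_choose_eq _ (Nat.cast_commute _ _),
    Nat.sum_antidiagonal_eq_sum_range_succ (fun a b => Ring.choose (#D : R) a * Ring.choose x b),
    sum_powerset_apply_card (fun k => Ring.choose x (n - k))]
  symm
  refine sum_subset (range_subset_range.mpr (by omega)) (fun k _ hk => ?_) |>.trans
    (sum_congr rfl fun k _ => ?_)
  · rw [Nat.choose_eq_zero_of_lt (by simpa using hk), zero_smul]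
  · rw [Ring.choose_natCast, nsmul_eq_mul]

theorem genChoose_eq_choose (x : ℝ) (m : ℕ) : genChoose x m = Ring.choose x m := by
  rw [genChoose, Ring.choose_eq_smul, descPochhammer_smeval_eq_eval,
    descPochhammer_eval_eq_prod_range, smul_eq_mul, div_eq_inv_mul]

section PartialInjection

variable {α β : Type*}

def IsPartialInj (f : α → Option β) : Prop :=
  ∀ i j r, f i = some r → f j = some r → i = j

def restrictPartial [DecidableEq α] (σ : Perm α) (T : Finset α) : α → Option α :=
  fun i => if i ∈ T then some (σ i) else none

variable [Fintype α]

def partialDom (f : α → Option β) : Finset α := {i | (f i).isSome}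

theorem mem_partialDom {f : α → Option β} {i : α} :
    i ∈ partialDom f ↔ ∃ r, f i = some r := by
  simp [partialDom, Option.isSome_iff_exists]

theorem Equiv.Perm.card_fixing [DecidableEq α] (S : Finset α) :
    #{τ : Perm α | ∀ i ∈ S, τ i = i} = (Fintype.card α - #S).factorial := by
  have e : Perm {i // i ∉ S} ≃ {τ : Perm α // ∀ i ∈ S, τ i = i} :=
    (Perm.subtypeEquivSubtypePerm (· ∉ S)).trans (subtypeEquivRight fun τ => by simp)
  rw [← Fintype.card_subtype, ← Fintype.card_congr e, Fintype.card_perm,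
    Fintype.card_subtype_compl, Fintype.card_coe]

theorem Equiv.Perm.exists_extends_of_isPartialInj {f : α → Option α}
    (hf : IsPartialInj f) :
    ∃ σ₀ : Perm α, ∀ i r, f i = some r → σ₀ i = r := by
  let g : partialDom f → α := fun i => (f i).get (by simpa [partialDom] using i.2)
  have hg : Function.Injective g := fun i j hij =>
    Subtype.ext (hf i j (g i) (by simp [g]) (by simp [g, hij]))
  obtain ⟨σ₀, hσ₀⟩ := Perm.exists_extending_pair Subtype.val g Subtype.val_injective hg
  refine ⟨σ₀, fun i r hir => ?_⟩
  simpa [g, hir] using hσ₀ ⟨i, mem_partialDom.mpr ⟨r, hir⟩⟩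

theorem Equiv.Perm.card_extending [DecidableEq α] {f : α → Option α} (hf : IsPartialInj f) :
    #{σ : Perm α | ∀ i r, f i = some r → σ i = r} =
      (Fintype.card α - #(partialDom f)).factorial := by
  obtain ⟨σ₀, hσ₀⟩ := Perm.exists_extends_of_isPartialInj hf
  rw [← Perm.card_fixing]
  refine card_nbij' (σ₀⁻¹ * ·) (σ₀ * ·) (fun σ hσ => ?_) (fun τ hτ => ?_)
    (fun σ _ => by simp) (fun τ _ => by simp)
  · simp only [coe_filter, Set.mem_ofPred_eq, mem_univ, true_and, mem_partialDom] at hσ ⊢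
    rintro i ⟨r, hir⟩
    simp [hσ i r hir, ← hσ₀ i r hir]
  · simp only [coe_filter, Set.mem_ofPred_eq, mem_univ, true_and, mem_partialDom] at hτ ⊢
    intro i r hir
    simp [hτ i ⟨r, hir⟩, hσ₀ i r hir]

theorem card_partialRange [Fintype β] [DecidableEq β] {f : α → Option β}
    (hf : IsPartialInj f) :
    #{r | ∃ i, f i = some r} = #(partialDom f) := by
  symm
  refine card_bij (fun i hi => (f i).get (mem_filter.mp hi).2)
    (fun i hi => mem_filter.mpr ⟨mem_univ _, i, (Option.some_get _).symm⟩)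
    (fun i _ j _ hij => hf i j _ (Option.some_get _).symm (by rw [hij, Option.some_get])) ?_
  simp only [mem_filter, mem_univ, true_and]
  rintro r ⟨i, hir⟩
  exact ⟨i, mem_partialDom.mpr ⟨r, hir⟩, Option.get_of_eq_some _ hir⟩

theorem restrictPartial_eq_iff [DecidableEq α] {σ : Perm α} {T : Finset α}
    {f : α → Option α} :
    restrictPartial σ T = f ↔ T = partialDom f ∧ ∀ i r, f i = some r → σ i = r := by
  constructor
  · rintro rfl
    refine ⟨?_, fun i r hir => ?_⟩
    · ext i
      simp [mem_partialDom, restrictPartial]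
    · by_cases hi : i ∈ T <;> simp_all [restrictPartial]
  · rintro ⟨rfl, hσ⟩
    funext i
    by_cases hi : i ∈ partialDom f
    · obtain ⟨r, hir⟩ := mem_partialDom.mp hi
      simp [restrictPartial, hi, hir, hσ i r hir]
    · rw [mem_partialDom, not_exists, ← Option.eq_none_iff_forall_ne_some] at hi
      simp [restrictPartial, mem_partialDom, hi]

end PartialInjection

section RookPlacement

variable {n m : ℕ}

/-- A placement of non-attacking rooks on the Ferrers board with column heights `c`: column `i`
holds a rook in row `r` iff `f i = some r`, rows being numbered from `0`. -/
def IsRookPlacement (c : Fin n → ℕ) (f : Fin n → Option (Fin m)) : Prop :=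
  IsPartialInj f ∧ ∀ i r, f i = some r → (r : ℕ) < c i

instance (c : Fin n → ℕ) : DecidablePred (IsRookPlacement (m := m) c) := fun _ => by
  unfold IsRookPlacement IsPartialInj; infer_instance

def hits (c : Fin n → ℕ) (σ : Perm (Fin n)) : Finset (Fin n) := {i | (σ i : ℕ) < c i}

theorem card_hits_le (c : Fin n → ℕ) (σ : Perm (Fin n)) : #(hits c σ) ≤ n :=
  (card_le_univ _).trans_eq (Fintype.card_fin n)

theorem isRookPlacement_restrictPartial {c : Fin n → ℕ} {σ : Perm (Fin n)} {T : Finset (Fin n)}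
    (hT : T ⊆ hits c σ) : IsRookPlacement c (restrictPartial σ T) := by
  refine ⟨fun i j r hi hj => ?_, fun i r hir => ?_⟩
  · by_cases hiT : i ∈ T <;> by_cases hjT : j ∈ T <;> simp [restrictPartial, hiT, hjT] at hi hj
    exact σ.injective (hi.trans hj.symm)
  · by_cases hiT : i ∈ T
    · simp only [restrictPartial, hiT, if_true, Option.some.injEq] at hir
      simpa [hits, hir] using hT hiT
    · simp [restrictPartial, hiT] at hir

theorem partialDom_subset_hits {c : Fin n → ℕ} {f : Fin n → Option (Fin n)}
    (hf : IsRookPlacement c f) {σ : Perm (Fin n)} (hσ : ∀ i r, f i = some r → σ i = r) :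
    partialDom f ⊆ hits c σ := by
  intro i hi
  obtain ⟨r, hir⟩ := mem_partialDom.mp hi
  simpa [hits, hσ i r hir] using hf.2 i r hir

theorem sum_powerset_hits_eq_sum_rookPlacements {M : Type*} [AddCommMonoid M] (c : Fin n → ℕ)
    (g : ℕ → M) :
    ∑ σ : Perm (Fin n), ∑ T ∈ (hits c σ).powerset, g #T =
      ∑ f : Fin n → Option (Fin n) with IsRookPlacement c f,
        (n - #(partialDom f)).factorial • g #(partialDom f) := by
  let pairs : Finset (Perm (Fin n) × Finset (Fin n)) := {p | p.2 ⊆ hits c p.1}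
  have fiber : ∀ f, IsRookPlacement c f →
      pairs.filter (fun p => restrictPartial p.1 p.2 = f) =
        (univ.filter fun σ : Perm (Fin n) => ∀ i r, f i = some r → σ i = r).image
          (·, partialDom f) := by
    intro f hf
    ext ⟨σ, T⟩
    simp only [mem_filter, mem_univ, true_and, mem_image, Prod.mk.injEq, pairs,
      restrictPartial_eq_iff]
    constructor
    · rintro ⟨-, rfl, hσ⟩
      exact ⟨σ, hσ, rfl, rfl⟩
    · rintro ⟨σ, hσ, rfl, rfl⟩
      exact ⟨partialDom_subset_hits hf hσ, rfl, hσ⟩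
  rw [← sum_finset_product pairs univ (fun σ => (hits c σ).powerset) (by simp [pairs])
      (f := fun p => g #p.2),
    ← sum_fiberwise_of_maps_to (g := fun p => restrictPartial p.1 p.2)
      (t := {f | IsRookPlacement c f})
      (fun p hp => by simpa using isRookPlacement_restrictPartial (mem_filter.mp hp).2)]
  refine sum_congr rfl fun f hf => ?_
  rw [fiber f (mem_filter.mp hf).2, sum_image (fun _ _ _ _ h => (Prod.mk.inj h).1)]
  simp only [sum_const]
  congr 1
  convert Perm.card_extending (mem_filter.mp hf).2.1
  exact (Fintype.card_fin n).symm

end RookPlacement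

section Snoc

variable {n m : ℕ}

theorem card_partialDom_snoc (f : Fin n → Option (Fin m)) (o : Option (Fin m)) :
    #(partialDom (Fin.snoc f o : Fin (n + 1) → Option (Fin m))) =
      #(partialDom f) + if o.isSome then 1 else 0 := by
  simp only [partialDom, card_filter, Fin.sum_univ_castSucc, Fin.snoc_castSucc, Fin.snoc_last]

theorem isRookPlacement_snoc {c : Fin (n + 1) → ℕ} {f : Fin n → Option (Fin m)}
    {o : Option (Fin m)} :
    IsRookPlacement c (Fin.snoc f o : Fin (n + 1) → Option (Fin m)) ↔
      IsRookPlacement (Fin.init c) f ∧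
        ∀ r, o = some r → (r : ℕ) < c (Fin.last n) ∧ ∀ i, f i ≠ some r := by
  simp only [IsRookPlacement, IsPartialInj, Fin.forall_fin_succ', Fin.snoc_castSucc,
    Fin.snoc_last, Fin.init, Fin.castSucc_inj, Fin.castSucc_ne_last,
    (Fin.castSucc_ne_last _).symm, imp_false, implies_true, and_true, ne_eq]
  grind

theorem card_free_rows_add_card_partialDom {c : Fin n → ℕ} {f : Fin n → Option (Fin m)}
    (hf : IsRookPlacement c f) {h : ℕ} (hch : ∀ i, c i ≤ h) (hhm : h ≤ m) :
    #{r : Fin m | (r : ℕ) < h ∧ ∀ i, f i ≠ some r} + #(partialDom f) = h := by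
  have hsub : ({r | ∃ i, f i = some r} : Finset (Fin m)) ⊆
      ({r | (r : ℕ) < h} : Finset (Fin m)) := by
    intro r hr
    obtain ⟨i, hir⟩ := (mem_filter.mp hr).2
    simpa using (hf.2 i r hir).trans_le (hch i)
  calc #{r : Fin m | (r : ℕ) < h ∧ ∀ i, f i ≠ some r} + #(partialDom f)
      = #(({r | (r : ℕ) < h} : Finset (Fin m)) \ ({r | ∃ i, f i = some r} : Finset (Fin m))) +
          #({r | ∃ i, f i = some r} : Finset (Fin m)) := by
        rw [← card_partialRange hf.1]
        congr 2 <;> ext r <;> simp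
    _ = h := by rw [card_sdiff_add_card_eq_card hsub, Fin.card_filter_val_lt, min_eq_right hhm]

end Snoc

section Induction

variable {R : Type*} [CommRing R] {m : ℕ}

/-- Leaving the last column empty contributes one more factor `x - (n - #f)` of the falling
factorial; putting its rook in one of the `c (last n) - #f` free rows contributes none. -/
theorem sum_snoc_descPochhammer_eval {n : ℕ} {c : Fin (n + 1) → ℕ} (hc : Monotone c)
    (hcm : c (Fin.last n) ≤ m) (x : R) (f : Fin n → Option (Fin m)) :
    ∑ o : Option (Fin m), (if IsRookPlacement c (Fin.snoc f o : Fin (n + 1) → Option (Fin m))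
        then (descPochhammer R (n + 1 - #(partialDom (Fin.snoc f o : Fin (n + 1) → _)))).eval x
        else 0) =
      if IsRookPlacement (Fin.init c) f then
        (descPochhammer R (n - #(partialDom f))).eval x * (x + c (Fin.last n) - n)
      else 0 := by
  by_cases hf : IsRookPlacement (Fin.init c) f
  swap
  · simp [isRookPlacement_snoc, hf]
  have hfree := card_free_rows_add_card_partialDom hf (fun i => hc (Fin.le_last _)) hcm
  have hkn : #(partialDom f) ≤ n := (card_le_univ _).trans_eq (Fintype.card_fin n)
  rw [Fintype.sum_option]
  simp only [isRookPlacement_snoc, hf, true_and, card_partialDom_snoc, Option.isSome_none,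
    Option.isSome_some, Bool.false_eq_true, if_false, if_true, add_zero, reduceCtorEq,
    IsEmpty.forall_iff, implies_true, Option.some.injEq, forall_eq']
  rw [← sum_filter, sum_const, show n + 1 - #(partialDom f) = n - #(partialDom f) + 1 by omega,
    Nat.add_sub_add_right, descPochhammer_succ_eval, nsmul_eq_mul]
  have hfree' := congrArg (Nat.cast : ℕ → R) hfree
  push_cast at hfree'
  rw [Nat.cast_sub hkn]
  linear_combination (descPochhammer R (n - #(partialDom f))).eval x * hfree'

theorem sum_rookPlacements_descPochhammer_eval (x : R) :
    ∀ {n : ℕ} (c : Fin n → ℕ), Monotone c → (∀ i, c i ≤ m) →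
      ∑ f : Fin n → Option (Fin m) with IsRookPlacement c f,
          (descPochhammer R (n - #(partialDom f))).eval x =
        ∏ i, (x + c i - i)
  | 0, c, _, _ => by simp [IsRookPlacement, IsPartialInj]
  | n + 1, c, hc, hcm => by
    have ih := sum_rookPlacements_descPochhammer_eval x (Fin.init c)
      (fun i j hij => hc (Fin.castSucc_le_castSucc_iff.mpr hij)) (fun i => hcm _)
    simp only [Fin.init] at ih
    rw [Fin.prod_univ_castSucc]
    simp only [Fin.val_castSucc, Fin.val_last]
    rw [← ih, sum_mul,
      sum_filter, sum_filter, ← (Fin.snocEquiv fun _ => Option (Fin m)).sum_comp,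
      Fintype.sum_prod_type_right]
    refine sum_congr rfl fun f _ => ?_
    exact sum_snoc_descPochhammer_eval hc (hcm _) x f

end Induction

theorem hB_eq_card_hits (n : ℕ) (c : Fin n → ℤ) (k : ℕ) :
    hB n c k = #{σ : Perm (Fin n) | #(hits (fun i => (c i).toNat) σ) = k} := by
  simp only [hB, hits, Int.lt_toNat, Nat.card_eq_fintype_card, Fintype.card_subtype]

theorem statement0_general (n : ℕ) (c : Fin n → ℤ)
    (hc0 : ∀ i, 0 ≤ c i) (hmono : ∀ i j : Fin n, i ≤ j → c i ≤ c j)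
    (hcn : ∀ i, c i ≤ (n : ℤ)) (x : ℝ) :
    ∏ i : Fin n, (x + (c i : ℝ) - ((i : ℕ) : ℝ)) =
      ∑ k ∈ Finset.range (n + 1), (hB n c k : ℝ) * genChoose (x + (k : ℝ)) n := by
  set h : Fin n → ℕ := fun i => (c i).toNat
  have h_mono : Monotone h := fun i j hij => Int.toNat_le_toNat (hmono i j hij)
  have h_le (i : Fin n) : h i ≤ n := Int.toNat_le.mpr (hcn i)
  calc ∏ i, (x + (c i : ℝ) - ((i : ℕ) : ℝ))
      = ∏ i, (x + h i - i) := by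
        refine prod_congr rfl fun i _ => ?_
        rw [show ((h i : ℕ) : ℝ) = c i by exact_mod_cast Int.toNat_of_nonneg (hc0 i)]
    _ = ∑ f : Fin n → Option (Fin n) with IsRookPlacement h f,
          (descPochhammer ℝ (n - #(partialDom f))).eval x :=
        (sum_rookPlacements_descPochhammer_eval x h h_mono h_le).symm
    _ = ∑ σ : Perm (Fin n), ∑ T ∈ (hits h σ).powerset, Ring.choose x (n - #T) := by
        rw [sum_powerset_hits_eq_sum_rookPlacements h fun j => Ring.choose x (n - j)]
        simp only [Ring.factorial_nsmul_choose_eq_descPochhammer_eval]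
    _ = ∑ σ : Perm (Fin n), Ring.choose (x + #(hits h σ)) n :=
        sum_congr rfl fun σ _ =>
          (Ring.choose_add_card_eq_sum_powerset x _ (card_hits_le h σ)).symm
    _ = ∑ k ∈ range (n + 1), (hB n c k : ℝ) * genChoose (x + k) n := by
        rw [← sum_fiberwise_of_maps_to (g := fun σ => #(hits h σ)) (t := range (n + 1))
          fun σ _ => mem_range.mpr (Nat.lt_succ_of_le (card_hits_le h σ))]
        refine sum_congr rfl fun k _ => ?_
        rw [sum_congr rfl fun σ hσ => by rw [(mem_filter.mp hσ).2], sum_const, nsmul_eq_mul,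
          hB_eq_card_hits, genChoose_eq_choose]

/-- Goldman–Joichi–White, hit polynomial form. For integers
`0 ≤ c 1 ≤ ⋯ ≤ c n ≤ n` and every real `x`,
`∏_{i=1}^n (x + c_i − i + 1) = Σ_{k=0}^n h_k(B) · C(x + k, n)`. -/
theorem statement0 (n : ℕ) (hn : 1 ≤ n) (c : Fin n → ℤ)
    (hc0 : ∀ i, 0 ≤ c i) (hmono : ∀ i j : Fin n, i ≤ j → c i ≤ c j)
    (hcn : ∀ i, c i ≤ (n : ℤ)) (x : ℝ) :
    ∏ i : Fin n, (x + (c i : ℝ) - ((i : ℕ) : ℝ)) =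
      ∑ k ∈ Finset.range (n + 1), (hB n c k : ℝ) * genChoose (x + (k : ℝ)) n :=
  statement0_general n c hc0 hmono hcn x
end

section
/- Let λ be a partition of n. Then the number of quasi-Yamanouchi tableaux of shape λ with maximum entry at most n equals the number of standard Young tableaux of shape λ. -/
/-- Cell membership: `(i, j)` (row `i` counted from the bottom, column `j`, both
0-indexed) is a cell of the Young diagram of the partition `p` (French notation). -/
def cellMem {n : ℕ} (p : Nat.Partition n) (i j : ℕ) : Prop :=
  i < (p.parts.filter (fun a => j < a)).card

instance {n : ℕ} (p : Nat.Partition n) (i j : ℕ) : Decidable (cellMem p i j) := by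
  unfold cellMem; infer_instance

/-- Semistandard Young tableaux of shape `p` (French convention): a filling of the
diagram of `p` by positive integers, weakly increasing left to right along rows and
strictly increasing up columns (row index increases going up). -/
structure SSYT {n : ℕ} (p : Nat.Partition n) where
  entry : ℕ → ℕ → ℕ
  pos : ∀ i j, cellMem p i j → 1 ≤ entry i j
  zeros : ∀ i j, ¬ cellMem p i j → entry i j = 0
  rowWeak : ∀ i j1 j2, j1 < j2 → cellMem p i j2 → entry i j1 ≤ entry i j2
  colStrict : ∀ i1 i2 j, i1 < i2 → cellMem p i2 j → entry i1 j < entry i2 j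
/-- Quasi-Yamanouchi: for every value `v ≥ 2` appearing in `T`, the leftmost occurrence
of `v` lies in a column weakly to the left of some occurrence of `v - 1` in a strictly
lower row. -/
def IsQY {n : ℕ} (p : Nat.Partition n) (T : SSYT p) : Prop :=
  ∀ v i j, 2 ≤ v → cellMem p i j → T.entry i j = v →
    (∀ i' j', cellMem p i' j' → T.entry i' j' = v → j ≤ j') →
    ∃ i' j', cellMem p i' j' ∧ T.entry i' j' = v - 1 ∧ i' < i ∧ j ≤ j'
/-- A standard Young tableau: each of the values `1, …, n` appears in exactly one cell. -/
def IsSYT {n : ℕ} (p : Nat.Partition n) (T : SSYT p) : Prop :=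
  ∀ v, 1 ≤ v → v ≤ n → ∃! c : ℕ × ℕ, cellMem p c.1 c.2 ∧ T.entry c.1 c.2 = v
/-- `|SYT(p)|`: the number of standard Young tableaux of shape `p`. -/
noncomputable def SYTcount {n : ℕ} (p : Nat.Partition n) : ℕ :=
  Nat.card {T : SSYT p // IsSYT p T}

/-!
Standardization numbers the cells of a tableau `T` by increasing entry, breaking ties from left to
right (equal entries of a semistandard tableau form a horizontal strip), and yields a standard
tableau. Conversely, call `k` a descent of a standard tableau `S` if `k + 1` lies in a strictly
higher row than `k`; destandardization replaces each entry `v` of `S` by one more than the number of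
descents below `v`, which gives a quasi-Yamanouchi tableau with entries at most `n`. The
quasi-Yamanouchi condition says exactly that, along the standardization order, the entries of `T`
go up (and then by one) precisely at the descents of the standardization, so the two maps are
mutually inverse.
-/

open Finset

theorem Finset.card_filter_lt_le_card_filter_lt {α β : Type*} [Preorder α] [DecidableLT α]
    (s : Finset β) (f : β → α) {a b : β} (h : f a ≤ f b) :
    #{x ∈ s | f x < f a} ≤ #{x ∈ s | f x < f b} :=
  card_le_card <| monotone_filter_right s fun _ _ hx => hx.trans_le h

theorem Finset.card_filter_lt_lt_card_filter_lt {α β : Type*} [Preorder α] [DecidableLT α]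
    (s : Finset β) (f : β → α) {a b : β} (ha : a ∈ s) (h : f a < f b) :
    #{x ∈ s | f x < f a} < #{x ∈ s | f x < f b} :=
  card_lt_card ⟨monotone_filter_right s fun _ _ hx => hx.trans h,
    fun hsub => lt_irrefl _ (mem_filter.1 (hsub (mem_filter.2 ⟨ha, h⟩))).2⟩

theorem Multiset.sum_range_card_filter_lt {n : ℕ} (s : Multiset ℕ) (hs : ∀ a ∈ s, a ≤ n) :
    ∑ j ∈ Finset.range n, Multiset.card (s.filter (j < ·)) = s.sum := by
  induction s using Multiset.induction with
  | empty => simp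
  | cons a s ih =>
    have hrange : {j ∈ Finset.range n | j < a} = Finset.range a := by
      have := hs a (mem_cons_self a s)
      ext j; simp only [Finset.mem_filter, Finset.mem_range]; omega
    simp [filter_cons, Finset.sum_add_distrib, apply_ite, hrange,
      ih fun x hx => hs x (mem_cons_of_mem hx)]

section Diagram

variable {n : ℕ} {p : Nat.Partition n} {i j : ℕ}

theorem cellMem_of_row_le {i' : ℕ} (h : cellMem p i j) (hi : i' ≤ i) : cellMem p i' j :=
  hi.trans_lt h

theorem cellMem_of_col_le {j' : ℕ} (h : cellMem p i j) (hj : j' ≤ j) : cellMem p i j' :=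
  h.trans_le <| Multiset.card_le_card <| Multiset.monotone_filter_right _ fun _ ha => hj.trans_lt ha

theorem cellMem.row_lt (h : cellMem p i j) : i < n := by
  have hcard : Multiset.card p.parts • 1 ≤ p.parts.sum :=
    Multiset.card_nsmul_le_sum fun _ ha => p.parts_pos ha
  have := Multiset.card_le_card (Multiset.filter_le (j < ·) p.parts)
  simp only [smul_eq_mul, mul_one, p.parts_sum] at hcard
  exact h.trans_le (this.trans hcard)

theorem cellMem.col_lt (h : cellMem p i j) : j < n := by
  obtain ⟨a, ha⟩ := Multiset.card_pos_iff_exists_mem.1 (i.zero_le.trans_lt h)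
  obtain ⟨hap, hja⟩ := Multiset.mem_filter.1 ha
  exact hja.trans_le (Nat.Partition.le_of_mem_parts hap)

variable (p) in
def cells : Finset (ℕ × ℕ) :=
  {c ∈ range n ×ˢ range n | cellMem p c.1 c.2}

@[simp]
theorem mem_cells {c : ℕ × ℕ} : c ∈ cells p ↔ cellMem p c.1 c.2 := by
  simp only [cells, mem_filter, mem_product, mem_range, and_iff_right_iff_imp]
  exact fun h => ⟨h.row_lt, h.col_lt⟩

variable (p) in
theorem card_cells : #(cells p) = n := by
  rw [card_eq_sum_card_fiberwise (f := Prod.snd) (t := range n)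
    fun c hc => mem_range.2 (mem_cells.1 hc).col_lt]
  have hcol (j : ℕ) : {c ∈ cells p | c.2 = j} =
      (range (Multiset.card (p.parts.filter (j < ·)))).image (·, j) := by
    ext ⟨i, j'⟩
    simp only [mem_filter, mem_cells, mem_image, mem_range, Prod.mk.injEq, cellMem]
    constructor
    · rintro ⟨h, rfl⟩; exact ⟨i, h, rfl, rfl⟩
    · rintro ⟨i, h, rfl, rfl⟩; exact ⟨h, rfl⟩
  simp only [hcol, card_image_of_injective _ (Prod.mk_left_injective _), card_range]
  rw [Multiset.sum_range_card_filter_lt p.parts fun _ => Nat.Partition.le_of_mem_parts, p.parts_sum]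

end Diagram

namespace SSYT

variable {n : ℕ} {p : Nat.Partition n}

@[ext]
theorem ext {T U : SSYT p} (h : T.entry = U.entry) : T = U := by
  cases T; cases U; simp_all

section Standardization

variable (T : SSYT p) {c d : ℕ × ℕ}

theorem entry_le_entry (hd : d ∈ cells p) (hi : c.1 ≤ d.1) (hj : c.2 ≤ d.2) :
    T.entry c.1 c.2 ≤ T.entry d.1 d.2 := by
  have hcorner : cellMem p c.1 d.2 := cellMem_of_row_le (mem_cells.1 hd) hi
  calc T.entry c.1 c.2 ≤ T.entry c.1 d.2 := by
        rcases hj.lt_or_eq with hj | hj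
        · exact T.rowWeak _ _ _ hj hcorner
        · rw [hj]
    _ ≤ T.entry d.1 d.2 := by
        rcases hi.lt_or_eq with hi | hi
        · exact (T.colStrict _ _ _ hi (mem_cells.1 hd)).le
        · rw [hi]

theorem entry_lt_entry (hd : d ∈ cells p) (hi : c.1 < d.1) (hj : c.2 ≤ d.2) :
    T.entry c.1 c.2 < T.entry d.1 d.2 := by
  have hd' : cellMem p d.1 d.2 := mem_cells.1 hd
  have hcorner : (c.1, d.2) ∈ cells p := mem_cells.2 (cellMem_of_row_le hd' hi.le)
  exact (T.entry_le_entry (c := c) hcorner le_rfl hj).trans_lt (T.colStrict _ _ _ hi hd')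

theorem row_le_of_entry_eq_of_col_lt (hd : d ∈ cells p)
    (he : T.entry c.1 c.2 = T.entry d.1 d.2) (hj : c.2 < d.2) : d.1 ≤ c.1 :=
  not_lt.1 fun hi => (T.entry_lt_entry hd hi hj.le).ne he

def key (c : ℕ × ℕ) : ℕ ×ₗ ℕ :=
  toLex (T.entry c.1 c.2, c.2)

theorem key_lt_key_iff : T.key c < T.key d ↔
    T.entry c.1 c.2 < T.entry d.1 d.2 ∨ T.entry c.1 c.2 = T.entry d.1 d.2 ∧ c.2 < d.2 :=
  Prod.Lex.lt_iff

theorem key_lt_key_of_entry_lt (h : T.entry c.1 c.2 < T.entry d.1 d.2) : T.key c < T.key d :=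
  (T.key_lt_key_iff).2 (Or.inl h)

theorem key_injOn : Set.InjOn T.key (cells p) := by
  rintro ⟨i, j⟩ hc ⟨i', j'⟩ hd h
  obtain ⟨he, rfl⟩ : T.entry i j = T.entry i' j' ∧ j = j' :=
    Prod.ext_iff.1 (toLex.injective h)
  rcases lt_trichotomy i i' with hi | rfl | hi
  · exact absurd he (T.colStrict _ _ _ hi (mem_cells.1 hd)).ne
  · rfl
  · exact absurd he (T.colStrict _ _ _ hi (mem_cells.1 hc)).ne'

def rank (c : ℕ × ℕ) : ℕ :=
  #{d ∈ cells p | T.key d < T.key c}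

theorem rank_lt_rank (hc : c ∈ cells p) (h : T.key c < T.key d) : T.rank c < T.rank d :=
  card_filter_lt_lt_card_filter_lt _ _ hc h

theorem key_lt_key_of_rank_lt (h : T.rank c < T.rank d) : T.key c < T.key d :=
  lt_of_not_ge fun h' => (card_filter_lt_le_card_filter_lt _ _ h').not_gt h

theorem rank_lt (hc : c ∈ cells p) : T.rank c < n :=
  calc T.rank c < #(cells p) := card_lt_card (filter_ssubset.2 ⟨c, hc, lt_irrefl (T.key c)⟩)
    _ = n := card_cells p

theorem rank_injOn : Set.InjOn T.rank (cells p) := by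
  intro c hc d hd h
  rcases lt_trichotomy (T.key c) (T.key d) with hk | hk | hk
  · exact absurd h (T.rank_lt_rank hc hk).ne
  · exact T.key_injOn hc hd hk
  · exact absurd h (T.rank_lt_rank hd hk).ne'

theorem exists_rank_eq {m : ℕ} (hm : m < n) : ∃ c ∈ cells p, T.rank c = m :=
  surjOn_of_injOn_of_card_le (t := range n) T.rank (fun _ hc => mem_range.2 (T.rank_lt hc))
    T.rank_injOn (by rw [card_range, card_cells]) (mem_range.2 hm)

def standardize : SSYT p where
  entry i j := if cellMem p i j then T.rank (i, j) + 1 else 0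
  pos i j h := by simp [h]
  zeros i j h := by simp [h]
  rowWeak i j₁ j₂ hj h₂ := by
    have h₁ : cellMem p i j₁ := cellMem_of_col_le h₂ hj.le
    have hkey : T.key (i, j₁) < T.key (i, j₂) := (T.key_lt_key_iff).2 <|
      (T.rowWeak i j₁ j₂ hj h₂).lt_or_eq.imp id fun he => ⟨he, hj⟩
    simpa [h₁, h₂] using (T.rank_lt_rank (mem_cells.2 h₁) hkey).le
  colStrict i₁ i₂ j hi h₂ := by
    have h₁ : cellMem p i₁ j := cellMem_of_row_le h₂ hi.le
    have hkey : T.key (i₁, j) < T.key (i₂, j) :=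
      T.key_lt_key_of_entry_lt (T.colStrict _ _ _ hi h₂)
    simpa [h₁, h₂] using T.rank_lt_rank (mem_cells.2 h₁) hkey

theorem standardize_entry (hc : c ∈ cells p) :
    T.standardize.entry c.1 c.2 = T.rank c + 1 :=
  if_pos (mem_cells.1 hc)

theorem isSYT_standardize : IsSYT p T.standardize := by
  intro v hv hvn
  obtain ⟨c, hc, hrank⟩ := T.exists_rank_eq (m := v - 1) (by omega)
  refine ⟨c, ⟨mem_cells.1 hc, by rw [T.standardize_entry hc]; omega⟩, ?_⟩
  rintro d ⟨hd, hdv⟩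
  rw [T.standardize_entry (mem_cells.2 hd)] at hdv
  exact T.rank_injOn (mem_cells.2 hd) hc (by omega)

end Standardization

section Descents

variable (S : SSYT p) {v : ℕ}

noncomputable def cellOf (v : ℕ) : ℕ × ℕ :=
  if h : ∃ c ∈ cells p, S.entry c.1 c.2 = v then h.choose else (0, 0)

def IsDescent (k : ℕ) : Prop :=
  (S.cellOf k).1 < (S.cellOf (k + 1)).1

noncomputable instance : DecidablePred S.IsDescent := fun _ => Nat.decLt _ _

noncomputable def descentCount (v : ℕ) : ℕ :=
  1 + #{k ∈ Ico 1 v | S.IsDescent k}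

theorem descentCount_mono : Monotone S.descentCount := fun _ _ h =>
  Nat.add_le_add_left (card_le_card (filter_subset_filter _ (Ico_subset_Ico_right h))) 1

@[simp]
theorem descentCount_of_le_one (hv : v ≤ 1) : S.descentCount v = 1 := by
  simp [descentCount, Ico_eq_empty_of_le hv]

theorem descentCount_le (hv : 1 ≤ v) : S.descentCount v ≤ v := by
  have : #{k ∈ Ico 1 v | S.IsDescent k} ≤ v - 1 :=
    (card_filter_le _ _).trans_eq (Nat.card_Ico 1 v)
  unfold descentCount
  omega

theorem descentCount_succ (hv : 1 ≤ v) :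
    S.descentCount (v + 1) = S.descentCount v + if S.IsDescent v then 1 else 0 := by
  rw [descentCount, descentCount, ← insert_Ico_right_eq_Ico_add_one hv, filter_insert]
  split_ifs <;> simp [add_assoc]

theorem exists_isDescent_of_two_le_descentCount (h : 2 ≤ S.descentCount v) :
    ∃ k, 1 ≤ k ∧ k < v ∧ S.IsDescent k ∧ S.descentCount (k + 1) = S.descentCount v := by
  have hex : ∃ u, S.descentCount u = S.descentCount v := ⟨v, rfl⟩
  have hu : S.descentCount (Nat.find hex) = S.descentCount v := Nat.find_spec hex
  have huv : Nat.find hex ≤ v := Nat.find_min' hex rfl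
  have h2 : 2 ≤ Nat.find hex := not_lt.1 fun hlt => by
    rw [S.descentCount_of_le_one (by omega)] at hu
    omega
  obtain ⟨k, hk⟩ : ∃ k, Nat.find hex = k + 1 + 1 := ⟨Nat.find hex - 2, by omega⟩
  have hprev : S.descentCount (k + 1) ≠ S.descentCount v := Nat.find_min hex (by omega)
  rw [hk] at hu huv
  refine ⟨k + 1, by omega, by omega, ?_, hu⟩
  by_contra hnd
  rw [S.descentCount_succ (by omega), if_neg hnd, add_zero] at hu
  exact hprev hu

end Descents

end SSYT

namespace IsSYT

variable {n : ℕ} {p : Nat.Partition n} {S : SSYT p} (hS : IsSYT p S) {c : ℕ × ℕ}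
  {k u v : ℕ}
include hS

theorem cellOf_spec (hv : 1 ≤ v) (hvn : v ≤ n) :
    S.cellOf v ∈ cells p ∧ S.entry (S.cellOf v).1 (S.cellOf v).2 = v := by
  have h : ∃ c ∈ cells p, S.entry c.1 c.2 = v := by
    obtain ⟨c, ⟨hc, hcv⟩, -⟩ := hS v hv hvn
    exact ⟨c, mem_cells.2 hc, hcv⟩
  rw [SSYT.cellOf, dif_pos h]
  exact h.choose_spec

theorem eq_cellOf (hc : c ∈ cells p) (hv : 1 ≤ v) (hvn : v ≤ n) (he : S.entry c.1 c.2 = v) :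
    c = S.cellOf v :=
  have h := hS.cellOf_spec hv hvn
  (hS v hv hvn).unique ⟨mem_cells.1 hc, he⟩ ⟨mem_cells.1 h.1, h.2⟩

theorem entry_le (hc : c ∈ cells p) : S.entry c.1 c.2 ≤ n := by
  have hmaps : Set.MapsTo S.cellOf (Icc 1 n) (cells p) := fun v hv =>
    (hS.cellOf_spec (mem_Icc.1 hv).1 (mem_Icc.1 hv).2).1
  have hinj : Set.InjOn S.cellOf (Icc 1 n) := fun v hv w hw h => by
    rw [← (hS.cellOf_spec (mem_Icc.1 hv).1 (mem_Icc.1 hv).2).2, h,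
      (hS.cellOf_spec (mem_Icc.1 hw).1 (mem_Icc.1 hw).2).2]
  obtain ⟨v, hv, rfl⟩ := surjOn_of_injOn_of_card_le _ hmaps hinj
    (by rw [card_cells, Nat.card_Icc, Nat.add_sub_cancel]) (mem_coe.2 hc)
  rw [(hS.cellOf_spec (mem_Icc.1 hv).1 (mem_Icc.1 hv).2).2]
  exact (mem_Icc.1 hv).2

theorem cellOf_entry (hc : c ∈ cells p) : S.cellOf (S.entry c.1 c.2) = c :=
  (hS.eq_cellOf hc (S.pos _ _ (mem_cells.1 hc)) (hS.entry_le hc) rfl).symm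

theorem col_lt_of_not_isDescent (hk : 1 ≤ k) (hkn : k + 1 ≤ n) (hnd : ¬ S.IsDescent k) :
    (S.cellOf k).2 < (S.cellOf (k + 1)).2 := by
  obtain ⟨hc, hce⟩ := hS.cellOf_spec hk (by omega)
  obtain ⟨-, hde⟩ := hS.cellOf_spec (v := k + 1) (by omega) hkn
  by_contra hcol
  have := S.entry_le_entry hc (not_lt.1 hnd) (not_lt.1 hcol)
  omega

theorem col_le_of_isDescent (hk : 1 ≤ k) (hkn : k + 1 ≤ n) (hd : S.IsDescent k) :
    (S.cellOf (k + 1)).2 ≤ (S.cellOf k).2 := by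
  obtain ⟨hc, hce⟩ := hS.cellOf_spec hk (by omega)
  obtain ⟨hd', hde⟩ := hS.cellOf_spec (v := k + 1) (by omega) hkn
  set c := S.cellOf k
  set d := S.cellOf (k + 1)
  -- otherwise the cell `(c.1, d.2)` would be a second cell with entry `k`
  by_contra hcol
  have hdm : cellMem p d.1 d.2 := mem_cells.1 hd'
  have hcorner : (c.1, d.2) ∈ cells p := mem_cells.2 (cellMem_of_row_le hdm hd.le)
  have hle : S.entry c.1 c.2 ≤ S.entry c.1 d.2 :=
    S.entry_le_entry (c := c) hcorner le_rfl (not_le.1 hcol).le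
  have hlt := S.colStrict c.1 d.1 d.2 hd hdm
  have hentry : S.entry c.1 d.2 = k := by omega
  exact hcol (congrArg Prod.snd (hS.eq_cellOf hcorner hk (by omega) hentry)).le

theorem col_cellOf_lt_of_descentCount_eq (hu : 1 ≤ u) (huv : u < v) (hvn : v ≤ n)
    (heq : S.descentCount u = S.descentCount v) : (S.cellOf u).2 < (S.cellOf v).2 := by
  induction v, huv using Nat.le_induction with
  | base =>
    refine hS.col_lt_of_not_isDescent hu hvn fun hd => ?_
    rw [S.descentCount_succ hu, if_pos hd] at heq
    omega
  | succ v huv ih =>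
    have hmid : S.descentCount u = S.descentCount v :=
      le_antisymm (S.descentCount_mono (by omega)) (heq ▸ S.descentCount_mono v.le_succ)
    refine (ih (by omega) hmid).trans (hS.col_lt_of_not_isDescent (by omega) hvn fun hd => ?_)
    rw [S.descentCount_succ (by omega), if_pos hd] at heq
    omega

end IsSYT

namespace SSYT

variable {n : ℕ} {p : Nat.Partition n} (S : SSYT p) {c : ℕ × ℕ} {v : ℕ}

theorem rank_standardize_cellOf (hv : 1 ≤ v) (hvn : v ≤ n) :
    S.standardize.cellOf v ∈ cells p ∧ S.rank (S.standardize.cellOf v) = v - 1 := by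
  obtain ⟨hmem, hentry⟩ := S.isSYT_standardize.cellOf_spec hv hvn
  rw [S.standardize_entry hmem] at hentry
  exact ⟨hmem, by omega⟩

noncomputable def destandardize (hS : IsSYT p S) : SSYT p where
  entry i j := if cellMem p i j then S.descentCount (S.entry i j) else 0
  pos i j h := by simp [h, descentCount]
  zeros i j h := if_neg h
  rowWeak i j₁ j₂ hj h₂ := by
    simp only [h₂, cellMem_of_col_le h₂ hj.le, if_true]
    exact S.descentCount_mono (S.rowWeak i j₁ j₂ hj h₂)
  colStrict i₁ i₂ j hi h₂ := by
    have h₁ := cellMem_of_row_le h₂ hi.le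
    simp only [h₁, h₂, if_true]
    have hlt := S.colStrict i₁ i₂ j hi h₂
    refine (S.descentCount_mono hlt.le).lt_of_ne fun heq => ?_
    have hcol := hS.col_cellOf_lt_of_descentCount_eq (S.pos _ _ h₁) hlt
      (hS.entry_le (c := (i₂, j)) (mem_cells.2 h₂)) heq
    rw [hS.cellOf_entry (c := (i₁, j)) (mem_cells.2 h₁),
      hS.cellOf_entry (c := (i₂, j)) (mem_cells.2 h₂)] at hcol
    exact lt_irrefl _ hcol

theorem destandardize_entry (hS : IsSYT p S) (hc : c ∈ cells p) :
    (S.destandardize hS).entry c.1 c.2 = S.descentCount (S.entry c.1 c.2) :=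
  if_pos (mem_cells.1 hc)

end SSYT

namespace IsSYT

variable {n : ℕ} {p : Nat.Partition n} {S : SSYT p} (hS : IsSYT p S) {c d : ℕ × ℕ}
include hS

theorem destandardize_le : ∀ i j, cellMem p i j → (S.destandardize hS).entry i j ≤ n := by
  intro i j hij
  have hc : (i, j) ∈ cells p := mem_cells.2 hij
  rw [S.destandardize_entry hS (c := (i, j)) hc]
  exact (S.descentCount_le (S.pos i j hij)).trans (hS.entry_le hc)

theorem isQY_destandardize : IsQY p (S.destandardize hS) := by
  intro w i j hw hij hentry hleft
  have hc : (i, j) ∈ cells p := mem_cells.2 hij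
  have hvn : S.entry i j ≤ n := hS.entry_le hc
  have hcellv : S.cellOf (S.entry i j) = (i, j) := hS.cellOf_entry hc
  rw [S.destandardize_entry hS (c := (i, j)) hc] at hentry
  obtain ⟨k, hk, hkv, hdesc, hk1⟩ :=
    S.exists_isDescent_of_two_le_descentCount (v := S.entry i j) (hentry ▸ hw)
  obtain ⟨hmem, hentryk⟩ := hS.cellOf_spec hk (by omega)
  obtain ⟨hmem1, hentry1⟩ := hS.cellOf_spec (v := k + 1) (by omega) (by omega)
  have hj : j ≤ (S.cellOf (k + 1)).2 :=
    hleft _ _ (mem_cells.1 hmem1) (by rw [S.destandardize_entry hS hmem1, hentry1, hk1, hentry])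
  have hcell : S.cellOf (k + 1) = (i, j) := by
    rcases (show k + 1 ≤ S.entry i j by omega).lt_or_eq with hlt | heq
    · have := hS.col_cellOf_lt_of_descentCount_eq (by omega) hlt hvn hk1
      rw [hcellv] at this
      omega
    · rw [heq, hcellv]
  refine ⟨(S.cellOf k).1, (S.cellOf k).2, mem_cells.1 hmem, ?_,
    by simpa [SSYT.IsDescent, hcell] using hdesc, ?_⟩
  · rw [S.destandardize_entry hS hmem, hentryk, ← hentry, ← hk1, S.descentCount_succ hk,
      if_pos hdesc, Nat.add_sub_cancel]
  · simpa [hcell] using hS.col_le_of_isDescent hk (by omega) hdesc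

theorem card_filter_entry_lt (hc : c ∈ cells p) :
    #{d ∈ cells p | S.entry d.1 d.2 < S.entry c.1 c.2} = S.entry c.1 c.2 - 1 := by
  have hvn := hS.entry_le hc
  rw [← Nat.card_Ico 1 (S.entry c.1 c.2)]
  refine card_nbij' (fun d => S.entry d.1 d.2) S.cellOf ?_ ?_ ?_ ?_
  · intro d hd
    obtain ⟨hd, hlt⟩ := mem_filter.1 hd
    exact mem_Ico.2 ⟨S.pos _ _ (mem_cells.1 hd), hlt⟩
  · intro v hv
    obtain ⟨hv1, hvc⟩ := mem_Ico.1 hv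
    obtain ⟨hmem, hentry⟩ := hS.cellOf_spec hv1 (by omega)
    exact mem_filter.2 ⟨hmem, by rwa [hentry]⟩
  · intro d hd
    exact hS.cellOf_entry (mem_filter.1 hd).1
  · intro v hv
    obtain ⟨hv1, hvc⟩ := mem_Ico.1 hv
    exact (hS.cellOf_spec hv1 (by omega)).2

theorem key_destandardize_lt_key_of_entry_lt (hc : c ∈ cells p) (hd : d ∈ cells p)
    (h : S.entry c.1 c.2 < S.entry d.1 d.2) :
    (S.destandardize hS).key c < (S.destandardize hS).key d := by
  rw [SSYT.key_lt_key_iff, S.destandardize_entry hS hc, S.destandardize_entry hS hd]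
  rcases (S.descentCount_mono h.le).lt_or_eq with hlt | heq
  · exact Or.inl hlt
  · refine Or.inr ⟨heq, ?_⟩
    have hcol := hS.col_cellOf_lt_of_descentCount_eq (S.pos _ _ (mem_cells.1 hc)) h
      (hS.entry_le hd) heq
    rwa [hS.cellOf_entry hc, hS.cellOf_entry hd] at hcol

theorem key_destandardize_lt_key_iff (hc : c ∈ cells p) (hd : d ∈ cells p) :
    (S.destandardize hS).key c < (S.destandardize hS).key d ↔
      S.entry c.1 c.2 < S.entry d.1 d.2 := by
  refine ⟨fun hkey => lt_of_not_ge fun hle => ?_, hS.key_destandardize_lt_key_of_entry_lt hc hd⟩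
  rcases hle.lt_or_eq with hlt | heq
  · exact (hS.key_destandardize_lt_key_of_entry_lt hd hc hlt).not_gt hkey
  · rw [← hS.cellOf_entry hc, ← hS.cellOf_entry hd, heq] at hkey
    exact lt_irrefl _ hkey

theorem standardize_destandardize : (S.destandardize hS).standardize = S := by
  ext i j
  by_cases hij : cellMem p i j
  · have hc : (i, j) ∈ cells p := mem_cells.2 hij
    rw [SSYT.standardize_entry _ hc, SSYT.rank,
      filter_congr fun d hd => hS.key_destandardize_lt_key_iff hd hc,
      hS.card_filter_entry_lt hc]
    exact Nat.sub_add_cancel (S.pos i j hij)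
  · rw [(S.destandardize hS).standardize.zeros i j hij, S.zeros i j hij]

end IsSYT

namespace IsQY

variable {n : ℕ} {p : Nat.Partition n} {T : SSYT p} (hQ : IsQY p T) {c d : ℕ × ℕ} {v : ℕ}
include hQ

theorem exists_lower_pred_of_minimal (hd : d ∈ cells p) (hw : 2 ≤ T.entry d.1 d.2)
    (hmin : ∀ e ∈ cells p, T.key e < T.key d → T.entry e.1 e.2 < T.entry d.1 d.2) :
    ∃ e ∈ cells p, T.entry e.1 e.2 = T.entry d.1 d.2 - 1 ∧ e.1 < d.1 ∧ d.2 ≤ e.2 := by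
  have hleftmost : ∀ i j, cellMem p i j → T.entry i j = T.entry d.1 d.2 → d.2 ≤ j :=
    fun i j hij he => not_lt.1 fun hj =>
      (hmin (i, j) (mem_cells.2 hij) ((T.key_lt_key_iff).2 (Or.inr ⟨he, hj⟩))).ne he
  obtain ⟨i, j, hij, he, hi, hj⟩ := hQ _ d.1 d.2 hw (mem_cells.1 hd) rfl hleftmost
  exact ⟨(i, j), mem_cells.2 hij, he, hi, hj⟩

theorem entry_eq_one_of_rank_eq_zero (hc : c ∈ cells p) (hr : T.rank c = 0) :
    T.entry c.1 c.2 = 1 := by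
  have hfirst : ∀ e ∈ cells p, ¬ T.key e < T.key c := fun e he hlt => by
    have := T.rank_lt_rank he hlt
    omega
  have hpos := T.pos _ _ (mem_cells.1 hc)
  by_contra hne
  obtain ⟨e, he, hentry, -⟩ :=
    hQ.exists_lower_pred_of_minimal hc (by omega) fun e he hlt => (hfirst e he hlt).elim
  exact hfirst e he (T.key_lt_key_of_entry_lt (by omega))

theorem entry_eq_of_rank_eq_succ (hc : c ∈ cells p) (hd : d ∈ cells p)
    (hr : T.rank d = T.rank c + 1) :
    T.entry d.1 d.2 = T.entry c.1 c.2 + if c.1 < d.1 then 1 else 0 := by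
  have hbefore : ∀ e ∈ cells p, T.key e < T.key d → T.key e ≤ T.key c := fun e he hed =>
    not_lt.1 fun hce => by
      have := T.rank_lt_rank hc hce
      have := T.rank_lt_rank he hed
      omega
  have hcd : T.key c < T.key d := T.key_lt_key_of_rank_lt (by omega)
  rcases (T.key_lt_key_iff).1 hcd with hlt | ⟨heq, hcol⟩
  · have hmin : ∀ e ∈ cells p, T.key e < T.key d → T.entry e.1 e.2 < T.entry d.1 d.2 :=
      fun e he hed => (Prod.Lex.monotone_fst _ _ (hbefore e he hed)).trans_lt hlt
    have hpos := T.pos _ _ (mem_cells.1 hc)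
    obtain ⟨e, he, hentry, hrow, -⟩ := hQ.exists_lower_pred_of_minimal hd (by omega) hmin
    have hec : T.key e ≤ T.key c := hbefore e he (T.key_lt_key_of_entry_lt (by omega))
    have hsame : T.entry e.1 e.2 = T.entry c.1 c.2 := by
      have := Prod.Lex.monotone_fst _ _ hec
      simp only [SSYT.key, ofLex_toLex] at this
      omega
    -- `c` is the rightmost cell with entry `T d - 1`, so it lies weakly below `e`
    have hdesc : c.1 < d.1 := by
      rcases hec.lt_or_eq with hec | hec
      · obtain hlt' | ⟨-, hcol⟩ := (T.key_lt_key_iff).1 hec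
        · omega
        · exact (T.row_le_of_entry_eq_of_col_lt hc hsame hcol).trans_lt hrow
      · rwa [← T.key_injOn he hc hec]
    rw [if_pos hdesc]
    omega
  · rw [if_neg (not_lt.2 (T.row_le_of_entry_eq_of_col_lt hd heq hcol)), heq, add_zero]

theorem entry_cellOf_standardize (hv : 1 ≤ v) (hvn : v ≤ n) :
    T.entry (T.standardize.cellOf v).1 (T.standardize.cellOf v).2 =
      T.standardize.descentCount v := by
  induction v, hv using Nat.le_induction with
  | base =>
    obtain ⟨hc, hr⟩ := T.rank_standardize_cellOf le_rfl hvn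
    rw [SSYT.descentCount_of_le_one _ le_rfl]
    exact hQ.entry_eq_one_of_rank_eq_zero hc hr
  | succ v hv ih =>
    obtain ⟨hc, hrc⟩ := T.rank_standardize_cellOf hv (by omega)
    obtain ⟨hd, hrd⟩ := T.rank_standardize_cellOf (v := v + 1) (by omega) hvn
    rw [hQ.entry_eq_of_rank_eq_succ hc hd (by omega), ih (by omega), SSYT.descentCount_succ _ hv]
    rfl

theorem destandardize_standardize : T.standardize.destandardize T.isSYT_standardize = T := by
  ext i j
  by_cases hij : cellMem p i j
  · have hc : (i, j) ∈ cells p := mem_cells.2 hij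
    have hS := T.isSYT_standardize
    rw [SSYT.destandardize_entry _ hS hc,
      ← hQ.entry_cellOf_standardize (T.standardize.pos i j hij) (hS.entry_le hc),
      hS.cellOf_entry hc]
  · rw [SSYT.zeros _ i j hij, T.zeros i j hij]

end IsQY

noncomputable def quasiYamanouchiEquivStandard {n : ℕ} (p : Nat.Partition n) :
    {T : SSYT p // IsQY p T ∧ ∀ i j, cellMem p i j → T.entry i j ≤ n} ≃
      {S : SSYT p // IsSYT p S} where
  toFun T := ⟨T.1.standardize, T.1.isSYT_standardize⟩
  invFun S := ⟨S.1.destandardize S.2, S.2.isQY_destandardize, S.2.destandardize_le⟩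
  left_inv T := Subtype.ext T.2.1.destandardize_standardize
  right_inv S := Subtype.ext S.2.standardize_destandardize

/-- For a partition `p` of `n`, the number of quasi-Yamanouchi tableaux
of shape `p` with maximum entry at most `n` equals the number of standard Young tableaux
of shape `p`. -/
theorem statement2 (n : ℕ) (p : Nat.Partition n) :
    Nat.card {T : SSYT p // IsQY p T ∧ ∀ i j, cellMem p i j → T.entry i j ≤ n} =
      SYTcount p :=
  Nat.card_congr (quasiYamanouchiEquivStandard p)
end

section
/- Let λ be a partition of n with conjugate partition λ′, and let 1 ≤ k ≤ n. Then the number of quasi-Yamanouchi tableaux of shape λ with maximum entry exactly k equals the number of quasi-Yamanouchi tableaux of shape λ′ with maximum entry exactly (n+1)−k. -/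
/-- `QYT_{=m}(p)`: the number of quasi-Yamanouchi tableaux of shape `p` with maximum
entry exactly `m`. -/
noncomputable def QYTeq {n : ℕ} (p : Nat.Partition n) (m : ℕ) : ℕ :=
  Nat.card {T : SSYT p // IsQY p T ∧ (∀ i j, cellMem p i j → T.entry i j ≤ m) ∧
    ∃ i j, cellMem p i j ∧ T.entry i j = m}

/-!
Standardization numbers the cells of a semistandard tableau by value, equal values from left
to right. On quasi-Yamanouchi tableaux it is inverted by destandardization, which fills a cell
of a standard tableau `S` with one more than the number of descents of `S` below its entry
(`d` is a descent when `d + 1` lies in a higher row than `d`). Hence quasi-Yamanouchi tableaux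
of shape `λ` with maximum `k` correspond to standard tableaux of shape `λ` with `k - 1`
descents. For consecutive entries, "higher row" and "further right" are complementary, so
transposition sends the descent set to its complement in `{1, …, n - 1}`, and standard tableaux
of shape `λ` with `k - 1` descents to those of shape `λ′` with `n - k` descents.
-/

namespace QuasiYamanouchi
open Finset

variable {n : ℕ}

section Diagram

variable {p : Nat.Partition n} {i j : ℕ}

theorem cellMem_of_row_le {i' : ℕ} (h : i' ≤ i) (hc : cellMem p i j) : cellMem p i' j :=
  h.trans_lt hc

theorem cellMem_of_col_le {j' : ℕ} (h : j' ≤ j) (hc : cellMem p i j) : cellMem p i j' :=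
  hc.trans_le <| Multiset.card_le_card <| Multiset.monotone_filter_right _ fun _ ha => h.trans_lt ha

variable (p) in
theorem card_filter_parts_le (j : ℕ) : (p.parts.filter (j < ·)).card ≤ n :=
  calc (p.parts.filter (j < ·)).card ≤ p.parts.card :=
        Multiset.card_le_card (Multiset.filter_le _ _)
    _ ≤ p.parts.sum := by simpa using Multiset.card_nsmul_le_sum (a := 1) fun _ => p.parts_pos
    _ = n := p.parts_sum

theorem row_lt_of_cellMem (hc : cellMem p i j) : i < n :=
  hc.trans_le (card_filter_parts_le p j)

theorem col_lt_of_cellMem (hc : cellMem p i j) : j < n := by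
  obtain ⟨a, ha, hja⟩ : ∃ a ∈ p.parts, j < a := by
    by_contra! h
    simp [cellMem, Multiset.filter_eq_nil.2 fun a ha => (h a ha).not_gt] at hc
  exact hja.trans_le (Nat.Partition.le_of_mem_parts ha)

theorem card_filter_range_lt {a m : ℕ} (h : a ≤ m) : #{x ∈ range m | x < a} = a := by
  rw [show {x ∈ range m | x < a} = range a by ext; simp; omega, card_range]

theorem sum_card_filter_lt (m : ℕ) (s : Multiset ℕ) (hs : ∀ a ∈ s, a ≤ m) :
    ∑ j ∈ range m, (s.filter (j < ·)).card = s.sum := by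
  induction s using Multiset.induction with
  | empty => simp
  | cons a s ih =>
    simp only [Multiset.filter_cons, Multiset.card_add, sum_add_distrib, Multiset.sum_cons,
      ih fun b hb => hs b (Multiset.mem_cons_of_mem hb), apply_ite Multiset.card,
      Multiset.card_singleton, Multiset.card_zero, sum_boole, Nat.cast_id,
      card_filter_range_lt (hs a (Multiset.mem_cons_self a s))]

variable (p) in
def cells : Finset (ℕ × ℕ) := {c ∈ range n ×ˢ range n | cellMem p c.1 c.2}

theorem mem_cells {c : ℕ × ℕ} : c ∈ cells p ↔ cellMem p c.1 c.2 := by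
  simp only [cells, mem_filter, mem_product, mem_range, and_iff_right_iff_imp]
  exact fun hc => ⟨row_lt_of_cellMem hc, col_lt_of_cellMem hc⟩

theorem mk_mem_cells : (i, j) ∈ cells p ↔ cellMem p i j := mem_cells

variable (p) in
theorem card_cells : #(cells p) = n := by
  have hcol : ∀ j, ∑ i ∈ range n, (if cellMem p i j then 1 else 0) =
      (p.parts.filter (j < ·)).card := fun j => by
    rw [sum_boole, Nat.cast_id]
    exact card_filter_range_lt (card_filter_parts_le p j)
  rw [cells, card_filter, sum_product_right]
  simp only [hcol]
  rw [sum_card_filter_lt n p.parts fun _ => Nat.Partition.le_of_mem_parts, p.parts_sum]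

end Diagram

section Rank

variable {ι α : Type*} [LinearOrder α] {s : Finset ι} {f : ι → α} {a b : ι}

variable (s f) in
def rankIn (a : ι) : ℕ := #{x ∈ s | f x < f a} + 1

theorem rankIn_lt_rankIn (ha : a ∈ s) (h : f a < f b) : rankIn s f a < rankIn s f b := by
  have hsub : {x ∈ s | f x < f a} ⊂ {x ∈ s | f x < f b} :=
    ⟨fun x hx => mem_filter.2 ⟨(mem_filter.1 hx).1, (mem_filter.1 hx).2.trans h⟩,
      fun hsub => lt_irrefl _ (mem_filter.1 (hsub (mem_filter.2 ⟨ha, h⟩))).2⟩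
  exact Nat.succ_lt_succ (card_lt_card hsub)

theorem le_of_rankIn_le (hb : b ∈ s) (h : rankIn s f a ≤ rankIn s f b) : f a ≤ f b :=
  not_lt.1 fun hba => (rankIn_lt_rankIn hb hba).not_ge h

theorem rankIn_le_card (ha : a ∈ s) : rankIn s f a ≤ #s :=
  card_lt_card (filter_ssubset.2 ⟨a, ha, lt_irrefl _⟩)

theorem rankIn_lt_rankIn_iff (hf : Set.InjOn f s) (ha : a ∈ s) (hb : b ∈ s) :
    rankIn s f a < rankIn s f b ↔ f a < f b := by
  refine ⟨fun h => (le_of_rankIn_le hb h.le).lt_of_ne fun hab => ?_, rankIn_lt_rankIn ha⟩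
  exact h.ne (congrArg _ (hf ha hb hab))

theorem rankIn_injOn (hf : Set.InjOn f s) : Set.InjOn (rankIn s f) s := fun _ hx _ hy h =>
  hf hx hy (le_antisymm (le_of_rankIn_le hy h.le) (le_of_rankIn_le hx h.ge))

theorem bijOn_rankIn (hf : Set.InjOn f s) : Set.BijOn (rankIn s f) s (Set.Icc 1 #s) := by
  have hmaps : Set.MapsTo (rankIn s f) s (Icc 1 #s) := fun a ha =>
    mem_Icc.2 ⟨Nat.le_add_left 1 _, rankIn_le_card ha⟩
  refine ⟨by simpa using hmaps, rankIn_injOn hf, ?_⟩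
  simpa using surjOn_of_injOn_of_card_le _ hmaps (rankIn_injOn hf) (by simp)

theorem rankIn_congr {β : Type*} [LinearOrder β] {g : ι → β}
    (h : ∀ x ∈ s, f x < f a ↔ g x < g a) : rankIn s f a = rankIn s g a := by
  unfold rankIn
  rw [filter_congr h]

theorem rankIn_eq_of_bijOn {g : ι → ℕ} {m : ℕ} (hg : Set.BijOn g s (Set.Icc 1 m))
    (ha : a ∈ s) : rankIn s g a = g a := by
  have hcard : #{x ∈ s | g x < g a} = #(Ico 1 (g a)) := by
    have hga := (hg.mapsTo ha).2
    refine card_nbij g (fun x hx => ?_) (hg.injOn.mono (coe_subset.2 (filter_subset _ _)))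
      (fun v hv => ?_)
    · obtain ⟨hxs, hxa⟩ := mem_filter.1 hx
      exact mem_Ico.2 ⟨(hg.mapsTo hxs).1, hxa⟩
    · obtain ⟨hv1, hva⟩ := mem_Ico.1 hv
      obtain ⟨x, hxs, rfl⟩ := hg.surjOn ⟨hv1, hva.le.trans hga⟩
      exact ⟨x, mem_filter.2 ⟨hxs, hva⟩, rfl⟩
  have := (hg.mapsTo ha).1
  rw [rankIn, hcard, Nat.card_Ico]
  omega

end Rank

attribute [ext] SSYT

section Semistandard

variable {p : Nat.Partition n} (T : SSYT p)

/-- Standardization numbers the cells of `T` in increasing order of this key: by value, and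
equal values from left to right. -/
def key (c : ℕ × ℕ) : ℕ ×ₗ ℕ := toLex (T.entry c.1 c.2, c.2)

variable {T} {a b : ℕ × ℕ}

theorem key_lt_key_iff :
    key T a < key T b ↔ T.entry a.1 a.2 < T.entry b.1 b.2 ∨
      T.entry a.1 a.2 = T.entry b.1 b.2 ∧ a.2 < b.2 :=
  Prod.Lex.toLex_lt_toLex

theorem entry_le_of_key_le (h : key T a ≤ key T b) : T.entry a.1 a.2 ≤ T.entry b.1 b.2 :=
  (Prod.Lex.toLex_le_toLex.1 h).elim le_of_lt fun h => h.1.le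

theorem col_le_of_key_le (h : key T a ≤ key T b) (hv : T.entry a.1 a.2 = T.entry b.1 b.2) :
    a.2 ≤ b.2 :=
  (Prod.Lex.toLex_le_toLex.1 h).elim (fun h => absurd hv h.ne) fun h => h.2

theorem row_le_of_entry_eq_of_col_le (hb : b ∈ cells p)
    (hv : T.entry a.1 a.2 = T.entry b.1 b.2) (hcol : a.2 ≤ b.2) : b.1 ≤ a.1 := by
  by_contra! hrow
  have hmid : T.entry a.1 a.2 ≤ T.entry a.1 b.2 := by
    rcases hcol.lt_or_eq with hcol | hcol
    · exact T.rowWeak a.1 a.2 b.2 hcol (cellMem_of_row_le hrow.le (mem_cells.1 hb))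
    · rw [hcol]
  have := T.colStrict a.1 b.1 b.2 hrow (mem_cells.1 hb)
  omega

theorem key_injOn : Set.InjOn (key T) (cells p) := by
  intro a ha b hb h
  obtain ⟨hv, hcol⟩ : T.entry a.1 a.2 = T.entry b.1 b.2 ∧ a.2 = b.2 := Prod.ext_iff.1 h
  exact Prod.ext (le_antisymm (row_le_of_entry_eq_of_col_le ha hv.symm hcol.ge)
    (row_le_of_entry_eq_of_col_le hb hv hcol.le)) hcol

end Semistandard

section Standard

variable (p : Nat.Partition n)

@[ext]
structure SYT where
  entry : ℕ × ℕ → ℕ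
  zeros : ∀ c ∉ cells p, entry c = 0
  rowStrict : ∀ i j1 j2, j1 < j2 → cellMem p i j2 → entry (i, j1) < entry (i, j2)
  colStrict : ∀ i1 i2 j, i1 < i2 → cellMem p i2 j → entry (i1, j) < entry (i2, j)
  bijOn : Set.BijOn entry (cells p) (Set.Icc 1 n)

namespace SYT

variable {p} (S : SYT p) {a b c : ℕ × ℕ} {v : ℕ}

noncomputable def cellOf (v : ℕ) : ℕ × ℕ := Function.invFunOn S.entry (cells p) v

variable {S}

theorem cellOf_mem (hv : v ∈ Set.Icc 1 n) : S.cellOf v ∈ cells p :=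
  Function.invFunOn_mem (S.bijOn.surjOn hv)

theorem entry_cellOf (hv : v ∈ Set.Icc 1 n) : S.entry (S.cellOf v) = v :=
  Function.invFunOn_eq (S.bijOn.surjOn hv)

theorem cellOf_entry (hc : c ∈ cells p) : S.cellOf (S.entry c) = c :=
  S.bijOn.injOn.leftInvOn_invFunOn hc

theorem entry_mem_Icc (hc : c ∈ cells p) : S.entry c ∈ Set.Icc 1 n := S.bijOn.mapsTo hc

theorem entry_lt_entry (hb : b ∈ cells p) (h : a < b) : S.entry a < S.entry b := by
  have hb' := mem_cells.1 hb
  rcases Prod.lt_iff.1 h with ⟨hrow, hcol⟩ | ⟨hrow, hcol⟩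
  · refine lt_of_le_of_lt ?_ (S.colStrict a.1 b.1 b.2 hrow hb')
    rcases hcol.lt_or_eq with hcol | hcol
    · exact (S.rowStrict a.1 a.2 b.2 hcol (cellMem_of_row_le hrow.le hb')).le
    · exact (congrArg S.entry (Prod.ext rfl hcol : a = (a.1, b.2))).le
  · refine lt_of_lt_of_le (S.rowStrict a.1 a.2 b.2 hcol (cellMem_of_row_le hrow hb')) ?_
    rcases hrow.lt_or_eq with hrow | hrow
    · exact (S.colStrict a.1 b.1 b.2 hrow hb').le
    · exact (congrArg S.entry (Prod.ext hrow rfl : (a.1, b.2) = b)).le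

/-- The entry `S a + 1` lies either strictly above `a` and weakly left of it, or weakly below
`a` and strictly right of it. -/
theorem col_lt_iff_row_le (ha : a ∈ cells p) (hb : b ∈ cells p)
    (hab : S.entry b = S.entry a + 1) : a.2 < b.2 ↔ b.1 ≤ a.1 := by
  constructor
  · intro hcol
    by_contra! hrow
    have hmid : (a.1, b.2) ∈ cells p := mem_cells.2 (cellMem_of_row_le hrow.le (mem_cells.1 hb))
    have h1 := S.entry_lt_entry (a := a) hmid (Prod.lt_iff.2 (Or.inr ⟨le_rfl, hcol⟩))
    have h2 := S.entry_lt_entry (a := (a.1, b.2)) hb (Prod.lt_iff.2 (Or.inl ⟨hrow, le_rfl⟩))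
    omega
  · intro hrow
    by_contra! hcol
    have := S.entry_lt_entry ha (lt_of_le_of_ne ⟨hrow, hcol⟩ fun h => by simp [h] at hab)
    omega

variable (S) in
noncomputable def descents : Finset ℕ := {d ∈ Ico 1 n | (S.cellOf d).1 < (S.cellOf (d + 1)).1}

theorem descents_subset : S.descents ⊆ Ico 1 n := filter_subset _ _

theorem mem_descents_iff (ha : a ∈ cells p) (hb : b ∈ cells p)
    (hab : S.entry b = S.entry a + 1) : S.entry a ∈ S.descents ↔ a.1 < b.1 := by
  have ha' := entry_mem_Icc (S := S) ha
  have hb' := entry_mem_Icc (S := S) hb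
  rw [descents, mem_filter, mem_Ico, ← hab, cellOf_entry ha, cellOf_entry hb]
  simp only [Set.mem_Icc] at ha' hb'
  omega

variable (S) in
noncomputable def desCount (v : ℕ) : ℕ := #{d ∈ S.descents | d < v}

theorem desCount_mono : Monotone S.desCount := fun _ _ huv =>
  card_le_card (monotone_filter_right _ fun _ _ h => h.trans_le huv)

theorem desCount_succ (d : ℕ) :
    S.desCount (d + 1) = S.desCount d + if d ∈ S.descents then 1 else 0 := by
  simp_rw [desCount, Nat.lt_succ_iff_lt_or_eq, filter_or, filter_eq']
  split_ifs with hd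
  · rw [union_singleton, card_insert_of_notMem (by simp)]
  · simp

theorem desCount_one : S.desCount 1 = 0 :=
  card_eq_zero.2 <| filter_false_of_mem fun _ hd => (mem_Ico.1 (S.descents_subset hd)).1.not_gt

theorem not_mem_descents_of_desCount_succ_le {d : ℕ} (h : S.desCount (d + 1) ≤ S.desCount d) :
    d ∉ S.descents := fun hd => by
  rw [desCount_succ, if_pos hd] at h
  omega

theorem desCount_eq_of_forall_le {u v : ℕ} (huv : u ≤ v)
    (h : ∀ d ∈ S.descents, u ≤ d → v ≤ d) : S.desCount u = S.desCount v := by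
  unfold desCount
  congr 1
  refine filter_congr fun d hd => ⟨fun hdu => hdu.trans_le huv, fun hdv => ?_⟩
  by_contra! hud
  exact (h d hd hud).not_gt hdv

theorem exists_last_descent {w : ℕ} (hw : S.desCount w ≠ 0) :
    ∃ d ∈ S.descents, d < w ∧ S.desCount (d + 1) = S.desCount w := by
  have hF : ({d ∈ S.descents | d < w}).Nonempty := card_pos.1 (Nat.pos_of_ne_zero hw)
  obtain ⟨hdD, hdw⟩ := mem_filter.1 (max'_mem _ hF)
  refine ⟨_, hdD, hdw, S.desCount_eq_of_forall_le hdw fun x hx hdx => ?_⟩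
  by_contra! hxw
  have := le_max' _ x (mem_filter.2 ⟨hx, hxw⟩ : x ∈ {d ∈ S.descents | d < w})
  omega

theorem row_le_and_col_lt_of_not_mem_descents (ha : a ∈ cells p) (hb : b ∈ cells p)
    (hab : S.entry b = S.entry a + 1) (hd : S.entry a ∉ S.descents) :
    b.1 ≤ a.1 ∧ a.2 < b.2 := by
  have hrow : b.1 ≤ a.1 := not_lt.1 fun h => hd ((mem_descents_iff ha hb hab).2 h)
  exact ⟨hrow, (col_lt_iff_row_le ha hb hab).2 hrow⟩

/-- A run of entries without descents moves strictly right and weakly down. -/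
theorem row_le_and_col_lt_of_desCount_eq (ha : a ∈ cells p) (hb : b ∈ cells p)
    (hab : S.entry a < S.entry b) (hdes : S.desCount (S.entry a) = S.desCount (S.entry b)) :
    b.1 ≤ a.1 ∧ a.2 < b.2 := by
  obtain ⟨k, hk⟩ : ∃ k, S.entry b = S.entry a + (k + 1) :=
    ⟨S.entry b - S.entry a - 1, by omega⟩
  induction k generalizing b with
  | zero =>
    refine row_le_and_col_lt_of_not_mem_descents ha hb hk
      (not_mem_descents_of_desCount_succ_le ?_)
    rw [← hk, hdes]
  | succ k ih =>
    have hb' := entry_mem_Icc (S := S) hb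
    have hcI : S.entry b - 1 ∈ Set.Icc 1 n := by
      simp only [Set.mem_Icc] at hb' ⊢
      omega
    set c := S.cellOf (S.entry b - 1)
    have hc : c ∈ cells p := cellOf_mem hcI
    have hcb : S.entry b = S.entry c + 1 := by rw [entry_cellOf hcI]; omega
    have hac : S.desCount (S.entry a) = S.desCount (S.entry c) :=
      le_antisymm (S.desCount_mono (by omega)) (hdes ▸ S.desCount_mono (by omega))
    obtain ⟨hrow, hcol⟩ := ih hc (by omega) hac (by omega)
    obtain ⟨hrow', hcol'⟩ := row_le_and_col_lt_of_not_mem_descents hc hb hcb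
      (not_mem_descents_of_desCount_succ_le (hcb ▸ hdes ▸ hac ▸ le_rfl))
    exact ⟨hrow'.trans hrow, hcol.trans hcol'⟩

end SYT

end Standard

section Standardization

variable {p : Nat.Partition n} (T : SSYT p) {a b c : ℕ × ℕ}

def standardize : SYT p where
  entry c := if c ∈ cells p then rankIn (cells p) (key T) c else 0
  zeros _ hc := if_neg hc
  rowStrict i j1 j2 hj hc := by
    have hc1 := cellMem_of_col_le hj.le hc
    simp only [if_pos (mk_mem_cells.2 hc1), if_pos (mk_mem_cells.2 hc)]
    refine rankIn_lt_rankIn (mk_mem_cells.2 hc1) (key_lt_key_iff.2 ?_)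
    rcases (T.rowWeak i j1 j2 hj hc).lt_or_eq with h | h
    · exact Or.inl h
    · exact Or.inr ⟨h, hj⟩
  colStrict i1 i2 j hi hc := by
    have hc1 := cellMem_of_row_le hi.le hc
    simp only [if_pos (mk_mem_cells.2 hc1), if_pos (mk_mem_cells.2 hc)]
    exact rankIn_lt_rankIn (mk_mem_cells.2 hc1)
      (key_lt_key_iff.2 (Or.inl (T.colStrict i1 i2 j hi hc)))
  bijOn := by
    have h := bijOn_rankIn (key_injOn (T := T))
    rw [card_cells] at h
    exact h.congr fun c hc => (if_pos hc).symm

variable {T}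

theorem standardize_entry (hc : c ∈ cells p) :
    (standardize T).entry c = rankIn (cells p) (key T) c :=
  if_pos hc

theorem IsQY.exists_pred_below (hqy : IsQY p T) (hb : b ∈ cells p) (hv : 2 ≤ T.entry b.1 b.2)
    (hfirst : ∀ c ∈ cells p, key T c < key T b → T.entry c.1 c.2 < T.entry b.1 b.2) :
    ∃ c ∈ cells p, T.entry c.1 c.2 + 1 = T.entry b.1 b.2 ∧ c.1 < b.1 ∧ b.2 ≤ c.2 := by
  have hleftmost : ∀ i j, cellMem p i j → T.entry i j = T.entry b.1 b.2 → b.2 ≤ j := by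
    intro i j hc hcv
    by_contra! hj
    exact (hfirst (i, j) (mem_cells.2 hc) (key_lt_key_iff.2 (Or.inr ⟨hcv, hj⟩))).ne hcv
  obtain ⟨i, j, hc, hcv, hrow, hcol⟩ := hqy _ b.1 b.2 hv (mem_cells.1 hb) rfl hleftmost
  exact ⟨(i, j), mem_cells.2 hc, by simp only; omega, hrow, hcol⟩

theorem IsQY.entry_eq_one (hqy : IsQY p T) (hb : b ∈ cells p)
    (hr : rankIn (cells p) (key T) b = 1) : T.entry b.1 b.2 = 1 := by
  have hfirst : ∀ c ∈ cells p, key T c < key T b → False := fun c hc h => by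
    have := rankIn_lt_rankIn hc h
    unfold rankIn at this hr
    omega
  by_contra hne
  have := T.pos b.1 b.2 (mem_cells.1 hb)
  obtain ⟨c, hc, hcv, -⟩ :=
    IsQY.exists_pred_below hqy hb (by omega) fun c hc h => (hfirst c hc h).elim
  exact hfirst c hc (key_lt_key_iff.2 (Or.inl (by omega)))

/-- Where the value increases, the quasi-Yamanouchi witness for `b` comes no later than `a` in
the standardization order; this forces a jump by exactly one, with `a` lying below `b`. -/
theorem IsQY.entry_of_rankIn_succ (hqy : IsQY p T) (ha : a ∈ cells p) (hb : b ∈ cells p)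
    (hr : rankIn (cells p) (key T) b = rankIn (cells p) (key T) a + 1) :
    T.entry b.1 b.2 = T.entry a.1 a.2 + 1 ∧ a.1 < b.1 ∨
      T.entry b.1 b.2 = T.entry a.1 a.2 ∧ b.1 ≤ a.1 := by
  have hkey : key T a < key T b := (rankIn_lt_rankIn_iff key_injOn ha hb).1 (by omega)
  have hbefore : ∀ c ∈ cells p, key T c < key T b → key T c ≤ key T a := fun c hc h =>
    le_of_rankIn_le ha (by have := rankIn_lt_rankIn hc h; omega)
  rcases (entry_le_of_key_le hkey.le).lt_or_eq with hlt | heq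
  · have := T.pos a.1 a.2 (mem_cells.1 ha)
    obtain ⟨c, hc, hcv, hrow, -⟩ := IsQY.exists_pred_below hqy hb (by omega) fun c hc h =>
      (entry_le_of_key_le (hbefore c hc h)).trans_lt hlt
    have hca := hbefore c hc (key_lt_key_iff.2 (Or.inl (by omega)))
    have hTca : T.entry c.1 c.2 = T.entry a.1 a.2 :=
      le_antisymm (entry_le_of_key_le hca) (by omega)
    exact Or.inl ⟨by omega,
      (row_le_of_entry_eq_of_col_le ha hTca (col_le_of_key_le hca hTca)).trans_lt hrow⟩
  · have hcol : a.2 < b.2 := (key_lt_key_iff.1 hkey).resolve_left heq.not_lt |>.2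
    exact Or.inr ⟨heq.symm, row_le_of_entry_eq_of_col_le hb heq hcol.le⟩

theorem IsQY.entry_eq_desCount_standardize (hqy : IsQY p T) (hc : c ∈ cells p) :
    T.entry c.1 c.2 = (standardize T).desCount ((standardize T).entry c) + 1 := by
  rw [standardize_entry hc]
  obtain ⟨r, hr⟩ : ∃ r, rankIn (cells p) (key T) c = r + 1 := ⟨_, rfl⟩
  rw [hr]
  induction r generalizing c with
  | zero => rw [IsQY.entry_eq_one hqy hc hr, SYT.desCount_one]
  | succ r ih =>
    have hrI : r + 1 ∈ Set.Icc 1 n := by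
      have := rankIn_le_card (f := key T) hc
      rw [card_cells] at this
      exact ⟨by omega, by omega⟩
    set a := (standardize T).cellOf (r + 1)
    have ha : a ∈ cells p := SYT.cellOf_mem hrI
    have hra : rankIn (cells p) (key T) a = r + 1 := by
      rw [← standardize_entry ha, SYT.entry_cellOf hrI]
    have hdes := SYT.mem_descents_iff ha hc
      (by rw [standardize_entry hc, standardize_entry ha, hr, hra])
    rw [standardize_entry ha, hra] at hdes
    have hTa := ih ha hra
    rw [SYT.desCount_succ]
    rcases IsQY.entry_of_rankIn_succ hqy ha hc (by rw [hr, hra]) with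
      ⟨hv, hrow⟩ | ⟨hv, hrow⟩
    · rw [if_pos (hdes.2 hrow)]
      omega
    · rw [if_neg fun h => (hdes.1 h).not_ge hrow]
      omega

end Standardization

section Destandardization

variable {p : Nat.Partition n} (S : SYT p) {a b c : ℕ × ℕ}

noncomputable def destandardize : SSYT p where
  entry i j := if cellMem p i j then S.desCount (S.entry (i, j)) + 1 else 0
  pos i j h := by simp [h]
  zeros i j h := by simp [h]
  rowWeak i j1 j2 hj hc := by
    have hc1 := cellMem_of_col_le hj.le hc
    simp only [if_pos hc1, if_pos hc]
    exact Nat.succ_le_succ (S.desCount_mono (S.rowStrict i j1 j2 hj hc).le)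
  colStrict i1 i2 j hi hc := by
    have hc1 := cellMem_of_row_le hi.le hc
    simp only [if_pos hc1, if_pos hc]
    have hlt := S.colStrict i1 i2 j hi hc
    refine Nat.succ_lt_succ ((S.desCount_mono hlt.le).lt_of_ne fun h => ?_)
    exact (S.row_le_and_col_lt_of_desCount_eq (mem_cells.2 hc1) (mem_cells.2 hc) hlt h).2.false

variable {S}

theorem destandardize_entry (hc : c ∈ cells p) :
    (destandardize S).entry c.1 c.2 = S.desCount (S.entry c) + 1 :=
  if_pos (mem_cells.1 hc)

theorem destandardize_entry_le (hc : c ∈ cells p) :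
    (destandardize S).entry c.1 c.2 ≤ #S.descents + 1 := by
  rw [destandardize_entry hc]
  exact Nat.succ_le_succ (card_le_card (filter_subset _ _))

theorem exists_destandardize_entry_eq (hn : 1 ≤ n) :
    ∃ c ∈ cells p, (destandardize S).entry c.1 c.2 = #S.descents + 1 := by
  have hnI : n ∈ Set.Icc 1 n := ⟨hn, le_rfl⟩
  refine ⟨S.cellOf n, SYT.cellOf_mem hnI, ?_⟩
  rw [destandardize_entry (SYT.cellOf_mem hnI), SYT.entry_cellOf hnI, SYT.desCount,
    filter_true_of_mem fun d hd => (mem_Ico.1 (S.descents_subset hd)).2]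

theorem key_destandardize_lt_key_destandardize (ha : a ∈ cells p) (hb : b ∈ cells p)
    (hab : S.entry a < S.entry b) : key (destandardize S) a < key (destandardize S) b := by
  rw [key_lt_key_iff, destandardize_entry ha, destandardize_entry hb]
  rcases (S.desCount_mono hab.le).lt_or_eq with h | h
  · exact Or.inl (Nat.succ_lt_succ h)
  · exact Or.inr ⟨by rw [h], (S.row_le_and_col_lt_of_desCount_eq ha hb hab h).2⟩

theorem key_destandardize_lt_key_destandardize_iff (ha : a ∈ cells p) (hb : b ∈ cells p) :
    key (destandardize S) a < key (destandardize S) b ↔ S.entry a < S.entry b := by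
  refine ⟨fun h => ?_, key_destandardize_lt_key_destandardize ha hb⟩
  by_contra! hba
  rcases hba.lt_or_eq with hba | hba
  · exact (key_destandardize_lt_key_destandardize hb ha hba).not_gt h
  · exact h.ne (congrArg _ (S.bijOn.injOn hb ha hba).symm)

/-- The witness for an entry `v ≥ 2` is the cell of the last descent `d` of `S` below its
`S`-entry: it carries `v - 1`, and the cell of `d + 1` lies strictly higher, weakly to the
left, and already carries `v`. -/
theorem isQY_destandardize : IsQY p (destandardize S) := by
  intro v i j hv hc hval hleft
  have hb : (i, j) ∈ cells p := mem_cells.2 hc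
  rw [destandardize_entry hb] at hval
  obtain ⟨d, hdD, -, hcount⟩ := S.exists_last_descent (w := S.entry (i, j)) (by omega)
  obtain ⟨hd1, hdn⟩ := mem_Ico.1 (S.descents_subset hdD)
  have hdI : d ∈ Set.Icc 1 n := ⟨hd1, hdn.le⟩
  have hdI' : d + 1 ∈ Set.Icc 1 n := ⟨by omega, hdn⟩
  set a := S.cellOf d
  set e := S.cellOf (d + 1)
  have ha : a ∈ cells p := SYT.cellOf_mem hdI
  have he : e ∈ cells p := SYT.cellOf_mem hdI'
  have hae : S.entry e = S.entry a + 1 := by rw [SYT.entry_cellOf hdI, SYT.entry_cellOf hdI']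
  have hrow : a.1 < e.1 := (SYT.mem_descents_iff ha he hae).1 (by rwa [SYT.entry_cellOf hdI])
  have hcol : e.2 ≤ a.2 := not_lt.1 fun h => hrow.not_ge ((SYT.col_lt_iff_row_le ha he hae).1 h)
  have hTe : (destandardize S).entry e.1 e.2 = v := by
    rw [destandardize_entry he, SYT.entry_cellOf hdI', hcount, hval]
  have hTa : (destandardize S).entry a.1 a.2 = v - 1 := by
    rw [destandardize_entry ha, SYT.entry_cellOf hdI, ← hval, ← hcount, SYT.desCount_succ,
      if_pos hdD]
    omega
  have hje : j ≤ e.2 := hleft e.1 e.2 (mem_cells.1 he) hTe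
  have hei : e.1 ≤ i := row_le_of_entry_eq_of_col_le (a := (i, j)) he
    (by rw [hTe, destandardize_entry hb, hval]) hje
  exact ⟨a.1, a.2, mem_cells.1 ha, hTa, by omega, by omega⟩

end Destandardization

section Transpose

variable {p q : Nat.Partition n}

theorem swap_mem_cells_iff (hconj : ∀ i j, cellMem q i j ↔ cellMem p j i) {c : ℕ × ℕ} :
    c.swap ∈ cells p ↔ c ∈ cells q := by
  rw [mem_cells, mem_cells, hconj]
  rfl

theorem bijOn_swap_cells (hconj : ∀ i j, cellMem q i j ↔ cellMem p j i) :
    Set.BijOn Prod.swap (cells q : Set (ℕ × ℕ)) (cells p) :=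
  ⟨fun _ hc => (swap_mem_cells_iff hconj).2 hc, Prod.swap_injective.injOn,
    fun c hc =>
      ⟨c.swap, (swap_mem_cells_iff hconj).1 (by rwa [Prod.swap_swap]), Prod.swap_swap c⟩⟩

namespace SYT

variable (hconj : ∀ i j, cellMem q i j ↔ cellMem p j i) (S : SYT p)

def transpose : SYT q where
  entry c := S.entry c.swap
  zeros _ hc := S.zeros _ (mt (swap_mem_cells_iff hconj).1 hc)
  rowStrict i j1 j2 hj hc := S.colStrict j1 j2 i hj ((hconj i j2).1 hc)
  colStrict i1 i2 j hi hc := S.rowStrict j i1 i2 hi ((hconj i2 j).1 hc)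
  bijOn := S.bijOn.comp (bijOn_swap_cells hconj)

theorem transpose_entry (c : ℕ × ℕ) : (S.transpose hconj).entry c = S.entry c.swap := rfl

theorem cellOf_transpose {v : ℕ} (hv : v ∈ Set.Icc 1 n) :
    (S.transpose hconj).cellOf v = (S.cellOf v).swap := by
  have hc : (S.cellOf v).swap ∈ cells q :=
    (swap_mem_cells_iff hconj).1 (by rw [Prod.swap_swap]; exact cellOf_mem hv)
  have h := cellOf_entry (S := S.transpose hconj) hc
  rwa [transpose_entry, Prod.swap_swap, entry_cellOf hv] at h

theorem descents_transpose : (S.transpose hconj).descents = Ico 1 n \ S.descents := by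
  ext d
  simp only [descents, mem_filter, mem_sdiff, and_congr_right_iff]
  intro hd
  obtain ⟨hd1, hdn⟩ := mem_Ico.1 hd
  have hdI : d ∈ Set.Icc 1 n := ⟨hd1, hdn.le⟩
  have hdI' : d + 1 ∈ Set.Icc 1 n := ⟨by omega, hdn⟩
  rw [cellOf_transpose hconj S hdI, cellOf_transpose hconj S hdI', Prod.fst_swap, Prod.fst_swap,
    col_lt_iff_row_le (cellOf_mem hdI) (cellOf_mem hdI')
      (by rw [entry_cellOf hdI, entry_cellOf hdI']), ← not_lt]
  exact not_congr (and_iff_right hd).symm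

theorem card_descents_transpose : #(S.transpose hconj).descents = n - 1 - #S.descents := by
  rw [descents_transpose, card_sdiff_of_subset S.descents_subset, Nat.card_Ico]

end SYT

end Transpose

section Counting

variable {p : Nat.Partition n}

theorem IsQY.destandardize_standardize {T : SSYT p} (hqy : IsQY p T) :
    destandardize (standardize T) = T := by
  ext i j
  by_cases hc : cellMem p i j
  · rw [destandardize_entry (mk_mem_cells.2 hc),
      ← IsQY.entry_eq_desCount_standardize hqy (mk_mem_cells.2 hc)]
  · rw [(destandardize (standardize T)).zeros i j hc, T.zeros i j hc]

theorem standardize_destandardize (S : SYT p) : standardize (destandardize S) = S := by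
  ext c
  by_cases hc : c ∈ cells p
  · rw [standardize_entry hc,
      rankIn_congr fun x hx => key_destandardize_lt_key_destandardize_iff hx hc]
    exact rankIn_eq_of_bijOn S.bijOn hc
  · rw [(standardize (destandardize S)).zeros c hc, S.zeros c hc]

theorem card_descents_standardize (hn : 1 ≤ n) {T : SSYT p} {m : ℕ} (hqy : IsQY p T)
    (hle : ∀ i j, cellMem p i j → T.entry i j ≤ m)
    (hex : ∃ i j, cellMem p i j ∧ T.entry i j = m) :
    #(standardize T).descents = m - 1 := by
  obtain ⟨i, j, hc, rfl⟩ := hex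
  obtain ⟨c, hc', hmax⟩ := exists_destandardize_entry_eq (S := standardize T) hn
  have h1 : (destandardize (standardize T)).entry i j ≤ _ :=
    destandardize_entry_le (mk_mem_cells.2 hc)
  rw [IsQY.destandardize_standardize hqy] at h1 hmax
  have h2 := hle c.1 c.2 (mem_cells.1 hc')
  omega

variable (p) in
noncomputable def qyEquivSYT (hn : 1 ≤ n) {m : ℕ} (hm : 1 ≤ m) :
    {T : SSYT p // IsQY p T ∧ (∀ i j, cellMem p i j → T.entry i j ≤ m) ∧
      ∃ i j, cellMem p i j ∧ T.entry i j = m} ≃ {S : SYT p // #S.descents = m - 1} where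
  toFun T := ⟨standardize T.1, card_descents_standardize hn T.2.1 T.2.2.1 T.2.2.2⟩
  invFun S := ⟨destandardize S.1, isQY_destandardize,
    fun i j hc => (destandardize_entry_le (mk_mem_cells.2 hc)).trans (by omega),
    by
      obtain ⟨c, hc, hmax⟩ := exists_destandardize_entry_eq (S := S.1) hn
      exact ⟨c.1, c.2, mem_cells.1 hc, by omega⟩⟩
  left_inv T := Subtype.ext (IsQY.destandardize_standardize T.2.1)
  right_inv S := Subtype.ext (standardize_destandardize S.1)

def transposeEquiv {q : Nat.Partition n} (hconj : ∀ i j, cellMem q i j ↔ cellMem p j i)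
    {d : ℕ} (hd : d ≤ n - 1) :
    {S : SYT p // #S.descents = d} ≃ {S : SYT q // #S.descents = n - 1 - d} where
  toFun S := ⟨S.1.transpose hconj, by rw [SYT.card_descents_transpose, S.2]⟩
  invFun S := ⟨S.1.transpose fun i j => (hconj j i).symm, by
    rw [SYT.card_descents_transpose, S.2]
    omega⟩
  left_inv _ := rfl
  right_inv _ := rfl

end Counting

end QuasiYamanouchi

/-- Let `p` be a partition of `n` and `q` its conjugate (i.e. the cells
of `q` are the reflections of the cells of `p`). Then for `1 ≤ k ≤ n`,
`QYT_{=k}(p) = QYT_{=(n+1)-k}(q)`. -/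
theorem statement4 (n k : ℕ) (p q : Nat.Partition n)
    (hconj : ∀ i j, cellMem q i j ↔ cellMem p j i)
    (hk1 : 1 ≤ k) (hkn : k ≤ n) :
    QYTeq p k = QYTeq q (n + 1 - k) := by
  have hn : 1 ≤ n := hk1.trans hkn
  open QuasiYamanouchi in
  calc QYTeq p k = Nat.card {S : SYT p // S.descents.card = k - 1} :=
        Nat.card_congr (qyEquivSYT p hn hk1)
    _ = Nat.card {S : SYT q // S.descents.card = n - 1 - (k - 1)} :=
        Nat.card_congr (transposeEquiv hconj (by omega))
    _ = QYTeq q (n + 1 - k) := by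
        rw [show n - 1 - (k - 1) = n + 1 - k - 1 by omega]
        exact (Nat.card_congr (qyEquivSYT q hn (by omega))).symm
end

section
/- For every n ≥ 1 and every real number x, x^n = Σ_{k=0}^{n−1} A(n, k) · C(x + k, n). -/
/-- The number of descents of a list (positions `i` with `w[i] > w[i+1]`). -/
def desList (w : List ℕ) : ℕ :=
  ((Finset.range (w.length - 1)).filter (fun i => w.getD (i + 1) 0 < w.getD i 0)).card

/-- The number of descents of a permutation of `Fin n` in one-line notation. -/
def desPerm {n : ℕ} (π : Equiv.Perm (Fin n)) : ℕ :=
  desList (List.ofFn (fun i => (π i : ℕ)))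
/-- The Eulerian number `A(n, k)`: the number of permutations of `n` letters with
exactly `k` descents. -/
noncomputable def eulerian (n k : ℕ) : ℕ :=
  Nat.card {π : Equiv.Perm (Fin n) // desPerm π = k}

/-!
Sort each map `f : Fin n → Fin m` by a permutation `π`, breaking ties by decreasing position, so
that `π` is unique and `f ∘ π` is weakly increasing, strictly at every ascent of `π`. Adding to
`f (π i)` the number of descents of `π` before `i` makes it strictly increasing into
`Fin (m + des π)`, and this is a bijection, so exactly `C(m + des π, n)` maps are sorted by `π`.
Hence `m ^ n = Σ_k A(n, k) C(m + k, n)` for every natural `m`; both sides are polynomials in `x`.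
-/

open Finset Polynomial

theorem Polynomial.eq_of_eval_natCast_eq {R : Type*} [CommRing R] [IsDomain R] [CharZero R]
    {p q : Polynomial R} (h : ∀ m : ℕ, p.eval (m : R) = q.eval (m : R)) : p = q :=
  Polynomial.eq_of_infinite_eval_eq p q <|
    (Set.infinite_range_of_injective Nat.cast_injective).mono <| by
      rintro _ ⟨m, rfl⟩
      exact h m

theorem Fin.val_add_sub_le_of_strictMono {k : ℕ} {f : Fin k → ℕ} (hf : StrictMono f)
    {i j : Fin k} (hij : i ≤ j) : f i + (j - i : ℕ) ≤ f j := by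
  have hcard : #(Icc i j) ≤ #(Icc (f i) (f j)) :=
    card_le_card_of_injOn f (fun x hx => by
      simp only [coe_Icc, Set.mem_Icc] at hx ⊢
      exact ⟨hf.monotone hx.1, hf.monotone hx.2⟩) hf.injective.injOn
  rw [Fin.card_Icc, Nat.card_Icc] at hcard
  have := hf.monotone hij
  rw [Fin.le_def] at hij
  omega

theorem Fin.card_orderEmbedding (k M : ℕ) : Nat.card (Fin k ↪o Fin M) = M.choose k := by
  rw [Nat.card_congr Set.powersetCard.ofFinEmbEquiv, Set.powersetCard.card, Nat.card_fin]

noncomputable def Tuple.sortEquiv {ι β : Type*} [LinearOrder β] {n : ℕ} (key : ι → Fin n → β)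
    (hkey : ∀ a, Function.Injective (key a)) :
    ι ≃ Σ π : Equiv.Perm (Fin n), {a : ι // StrictMono (key a ∘ π)} where
  toFun a := ⟨Tuple.sort (key a), a,
    (Tuple.monotone_sort (key a)).strictMono_of_injective ((hkey a).comp (Equiv.injective _))⟩
  invFun p := p.2.1
  left_inv _ := rfl
  right_inv := fun ⟨π, a, ha⟩ => by
    obtain rfl : Tuple.sort (key a) = π := Equiv.ext fun i => hkey a <| congrFun
      (Tuple.unique_monotone (Tuple.monotone_sort (key a)) ha.monotone) i
    rfl

namespace Worpitzky

section Staircase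

variable {d : ℕ → ℕ} (hd0 : d 0 = 0) (hd : ∀ i, d i ≤ d (i + 1) ∧ d (i + 1) ≤ d i + 1)
include hd

theorem apply_le_apply_add_sub {i j : ℕ} (hij : i ≤ j) : d j ≤ d i + (j - i) := by
  induction j, hij using Nat.le_induction with
  | base => simp
  | succ j hij ih => have := (hd j).2; omega

include hd0

theorem apply_le_val_orderEmbedding_apply {n M : ℕ} (c : Fin (n + 1) ↪o Fin M)
    (i : Fin (n + 1)) : d i ≤ c i := by
  have := apply_le_apply_add_sub hd (Nat.zero_le i)
  have := Fin.val_add_sub_le_of_strictMono (Fin.val_strictMono.comp c.strictMono) (Fin.zero_le i)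
  simp only [Function.comp_apply, Fin.val_zero] at this
  omega

/-- Adding the staircase `d` turns maps that may stay level exactly where `d` steps up into
strictly increasing ones. -/
def addStaircaseEquiv (n m : ℕ) :
    {g : Fin (n + 1) → Fin m // StrictMono fun i => (g i : ℕ) + d i} ≃
      (Fin (n + 1) ↪o Fin (m + d n)) where
  toFun g := OrderEmbedding.ofStrictMono
    (fun i => ⟨g.1 i + d i, by
      have := monotone_nat_of_le_succ (fun i => (hd i).1) (Nat.le_of_lt_succ i.2)
      have := (g.1 i).2
      omega⟩)
    (fun i j hij => Fin.mk_lt_mk.2 (g.2 hij))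
  invFun c := ⟨fun i => ⟨c i - d i, by
      have hlast := Fin.val_add_sub_le_of_strictMono (Fin.val_strictMono.comp c.strictMono)
        (Fin.le_last i)
      have := apply_le_val_orderEmbedding_apply hd0 hd c i
      have := apply_le_apply_add_sub hd (Nat.le_of_lt_succ i.2)
      have := (c (Fin.last n)).2
      simp only [Function.comp_apply, Fin.val_last] at hlast
      omega⟩, fun i j hij => by
    have := apply_le_val_orderEmbedding_apply hd0 hd c i
    have := apply_le_val_orderEmbedding_apply hd0 hd c j
    have := c.strictMono hij
    simp only [Fin.lt_def] at this ⊢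
    omega⟩
  left_inv g := by ext i; simp [OrderEmbedding.ofStrictMono]
  right_inv c := by
    ext i
    have := apply_le_val_orderEmbedding_apply hd0 hd c i
    simp only [OrderEmbedding.ofStrictMono, OrderEmbedding.coe_ofMapLEIff]
    omega

end Staircase

variable {n : ℕ}

def oneLine (π : Equiv.Perm (Fin n)) (i : ℕ) : ℕ := (List.ofFn fun j => (π j : ℕ)).getD i 0

theorem oneLine_val (π : Equiv.Perm (Fin n)) (i : Fin n) : oneLine π i = π i := by
  simp [oneLine, List.getD_eq_getElem?_getD]

def descentsBefore (π : Equiv.Perm (Fin n)) (i : ℕ) : ℕ :=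
  #{j ∈ range i | oneLine π (j + 1) < oneLine π j}

theorem descentsBefore_succ (π : Equiv.Perm (Fin n)) (i : ℕ) :
    descentsBefore π (i + 1) =
      descentsBefore π i + if oneLine π (i + 1) < oneLine π i then 1 else 0 := by
  rw [descentsBefore, range_add_one, filter_insert]
  split_ifs <;> simp [card_insert_of_notMem, descentsBefore]

theorem descentsBefore_zero (π : Equiv.Perm (Fin n)) : descentsBefore π 0 = 0 := rfl

theorem descentsBefore_le_succ (π : Equiv.Perm (Fin n)) (i : ℕ) :
    descentsBefore π i ≤ descentsBefore π (i + 1) ∧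
      descentsBefore π (i + 1) ≤ descentsBefore π i + 1 := by
  rw [descentsBefore_succ]
  split_ifs <;> omega

theorem descentsBefore_le (π : Equiv.Perm (Fin n)) (i : ℕ) : descentsBefore π i ≤ i :=
  (card_filter_le _ _).trans_eq (card_range i)

theorem desPerm_eq_descentsBefore (π : Equiv.Perm (Fin (n + 1))) :
    desPerm π = descentsBefore π n := by
  simp [desPerm, desList, descentsBefore, oneLine]

theorem descentsBefore_castSucc_succ (π : Equiv.Perm (Fin (n + 1))) (i : Fin n) :
    descentsBefore π i.succ =
      descentsBefore π i.castSucc + if (π i.succ : ℕ) < π i.castSucc then 1 else 0 := by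
  rw [Fin.val_succ, descentsBefore_succ, ← Fin.val_succ, ← Fin.val_castSucc i, oneLine_val,
    oneLine_val]

/-- Ties are broken by decreasing position, so the sorting permutation descends inside every
block of equal values. -/
def sortKey {m : ℕ} (f : Fin n → Fin m) (i : Fin n) : Fin m ×ₗ (Fin n)ᵒᵈ :=
  toLex (f i, OrderDual.toDual i)

theorem sortKey_injective {m : ℕ} (f : Fin n → Fin m) : Function.Injective (sortKey f) :=
  fun _ _ h => by simpa [sortKey] using congrArg (fun x => (ofLex x).2) h

theorem strictMono_sortKey_comp_iff {m : ℕ} (π : Equiv.Perm (Fin (n + 1)))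
    (f : Fin (n + 1) → Fin m) :
    StrictMono (sortKey f ∘ π) ↔ StrictMono fun i => (f (π i) : ℕ) + descentsBefore π i := by
  simp only [Fin.strictMono_iff_lt_succ, Function.comp_apply, sortKey, Prod.Lex.toLex_lt_toLex,
    descentsBefore_castSucc_succ, OrderDual.toDual_lt_toDual]
  refine forall_congr' fun i => ?_
  have : π i.succ ≠ π i.castSucc := π.injective.ne i.castSucc_lt_succ.ne'
  simp only [Fin.lt_def, Fin.ext_iff, ne_eq] at *
  split_ifs <;> omega

theorem card_strictMono_sortKey_comp (π : Equiv.Perm (Fin (n + 1))) (m : ℕ) :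
    Nat.card {f : Fin (n + 1) → Fin m // StrictMono (sortKey f ∘ π)} =
      (m + desPerm π).choose (n + 1) := by
  rw [desPerm_eq_descentsBefore, ← Fin.card_orderEmbedding,
    ← Nat.card_congr (addStaircaseEquiv (descentsBefore_zero π) (descentsBefore_le_succ π) n m)]
  exact Nat.card_congr <| (π.symm.arrowCongr (Equiv.refl _)).subtypeEquiv fun f => by
    simpa using strictMono_sortKey_comp_iff π f

theorem pow_succ_eq_sum_eulerian_mul_choose (n m : ℕ) :
    m ^ (n + 1) = ∑ k ∈ range (n + 1), eulerian (n + 1) k * (m + k).choose (n + 1) := by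
  classical
  calc m ^ (n + 1) = Nat.card (Fin (n + 1) → Fin m) := by simp
    _ = ∑ π : Equiv.Perm (Fin (n + 1)), (m + desPerm π).choose (n + 1) := by
      rw [Nat.card_congr (Tuple.sortEquiv sortKey sortKey_injective), Nat.card_sigma]
      simp only [card_strictMono_sortKey_comp]
    _ = ∑ k ∈ range (n + 1), ∑ π with desPerm π = k, (m + desPerm π).choose (n + 1) := by
      refine (sum_fiberwise_of_maps_to (fun π _ => mem_range.2 ?_) _).symm
      exact Nat.lt_succ_of_le ((desPerm_eq_descentsBefore π).trans_le (descentsBefore_le π n))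
    _ = _ := sum_congr rfl fun k _ => by
      rw [sum_congr rfl fun π hπ => by rw [(mem_filter.1 hπ).2], sum_const, smul_eq_mul, eulerian,
        Nat.card_eq_fintype_card, Fintype.card_subtype]

end Worpitzky

theorem genChoose_eq_eval_descPochhammer (x : ℝ) (k : ℕ) :
    genChoose x k = (descPochhammer ℝ k).eval x / k.factorial := by
  rw [genChoose, descPochhammer_eval_eq_prod_range]

theorem genChoose_natCast (a k : ℕ) : genChoose a k = a.choose k := by
  rw [genChoose_eq_eval_descPochhammer, Nat.cast_choose_eq_descPochhammer_div]

/-- Worpitzky's identity. For `n ≥ 1` and every real `x`,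
`x^n = Σ_{k=0}^{n−1} A(n, k) · C(x + k, n)`. -/
theorem statement8 (n : ℕ) (hn : 1 ≤ n) (x : ℝ) :
    x ^ n = ∑ k ∈ Finset.range n, (eulerian n k : ℝ) * genChoose (x + (k : ℝ)) n := by
  obtain ⟨n, rfl⟩ := Nat.exists_eq_add_of_le' hn
  set p : ℝ[X] := ∑ k ∈ range (n + 1), C ((eulerian (n + 1) k : ℝ) / (n + 1).factorial) *
    (descPochhammer ℝ (n + 1)).comp (X + C (k : ℝ))
  have eval_p (y : ℝ) :
      p.eval y = ∑ k ∈ range (n + 1), (eulerian (n + 1) k : ℝ) * genChoose (y + k) (n + 1) := by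
    simp [p, eval_finsetSum, genChoose_eq_eval_descPochhammer, mul_comm_div]
  have hp : X ^ (n + 1) = p := Polynomial.eq_of_eval_natCast_eq fun m => by
    simp only [eval_p, eval_pow, eval_X, ← Nat.cast_add, genChoose_natCast]
    exact_mod_cast Worpitzky.pow_succ_eq_sum_eulerian_mul_choose n m
  simpa [eval_p] using congrArg (eval x) hp
end
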